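/- arXiv:2511.19045 — 6 statements merged into one kernel-verified Lean document; each statement's English description precedes it below -/
import Mathlib

section
/- Let n, d, r be positive integers and p ≥ 2 an integer, let F ∈ ℝ^{n×d}, λ > 0, X_* ∈ ℝ^{d×r}, ε ∈ ℝⁿ, and set y := |F X_*| + ε; assume y_i ≥ 0 for all i. Let U_* ∈ ℝ^{n×r} have unit-norm rows with F X_* = diag(|F X_*|) U_*, and set X_λ := (nλ I_d + Fᵀ F)^{-1} Fᵀ diag(y) U_*. Let M_λ := λ · diag(y) (nλ I_n + F Fᵀ)^{-1} diag(y). Suppose U ∈ ℝ^{n×p} has unit-norm rows and, with S(U) := M_λ − ddiag(M_λ U Uᵀ), satisfies the first- and second-order criticality conditions S(U)·U = 0 and ⟨S(U), Ů Ůᵀ⟩ ≥ 0 for every Ů ∈ ℝ^{n×p} with diag(U Ůᵀ + Ů Uᵀ) = 0. Then, with X := (nλ I_d + Fᵀ F)^{-1} Fᵀ diag(y) U, for every R ∈ ℝ^{p×r}: (1/n)‖α(X) − α(X_*)‖² ≤ (2/n)⟨ε, α(X) − α(X_*)⟩ + λ(‖X_*‖² − ‖X‖²) + (1/(p−1))·[(1/n)‖F(X_λ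 − X R)‖² + λ‖X_λ − X R‖²]. -/
open Matrix Filter Finset
open scoped Classical

set_option maxHeartbeats 1000000

noncomputable section

/-- Frobenius inner product `⟨A, B⟩ = tr(Bᵀ A)` of real square matrices. -/
def mip {d : ℕ} (A B : Matrix (Fin d) (Fin d) ℝ) : ℝ := (Bᵀ * A).trace

/-- Squared Frobenius norm of a real matrix. -/
def frobSq {m p : ℕ} (X : Matrix (Fin m) (Fin p) ℝ) : ℝ := ∑ i, ∑ j, (X i j) ^ 2

/-- Squared Euclidean norm of a real vector. -/
def vnormSq {n : ℕ} (v : Fin n → ℝ) : ℝ := ∑ i, (v i) ^ 2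

/-- Euclidean norm of a real vector. -/
def vnorm {n : ℕ} (v : Fin n → ℝ) : ℝ := Real.sqrt (vnormSq v)

/-- Euclidean inner product of real vectors. -/
def vip {n : ℕ} (u v : Fin n → ℝ) : ℝ := ∑ i, u i * v i

/-- `ddiag A` keeps the diagonal of `A`, setting off-diagonal entries to zero. -/
def ddiag {n : ℕ} (A : Matrix (Fin n) (Fin n) ℝ) : Matrix (Fin n) (Fin n) ℝ :=
  Matrix.diagonal fun i => A i i

/-- `rowNorms M` is the vector of Euclidean norms of the rows of `M` (`|M|`). -/
def rowNorms {n k : ℕ} (M : Matrix (Fin n) (Fin k) ℝ) : Fin n → ℝ :=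
  fun i => Real.sqrt (∑ j, (M i j) ^ 2)

-- === auxiliary ===

def fip {a b : ℕ} (A B : Matrix (Fin a) (Fin b) ℝ) : ℝ := ∑ i, ∑ j, A i j * B i j
def rip {n k : ℕ} (A : Matrix (Fin n) (Fin k) ℝ) (i j : Fin n) : ℝ := ∑ t, A i t * A j t

lemma sum3_rot {X Y Z : Type*} [Fintype X] [Fintype Y] [Fintype Z] (f : X → Y → Z → ℝ) :
    ∑ i, ∑ j, ∑ k, f i j k = ∑ k, ∑ j, ∑ i, f i j k := by
  calc ∑ i, ∑ j, ∑ k, f i j k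
      = ∑ i, ∑ k, ∑ j, f i j k :=
        Finset.sum_congr rfl fun i _ => Finset.sum_comm
    _ = ∑ k, ∑ i, ∑ j, f i j k := Finset.sum_comm
    _ = ∑ k, ∑ j, ∑ i, f i j k :=
        Finset.sum_congr rfl fun k _ => Finset.sum_comm

lemma sum4_swap {X Y U V : Type*} [Fintype X] [Fintype Y] [Fintype U] [Fintype V]
    (f : X → Y → U → V → ℝ) :
    ∑ a, ∑ b, ∑ i, ∑ j, f a b i j = ∑ i, ∑ j, ∑ a, ∑ b, f a b i j := by
  calc ∑ a, ∑ b, ∑ i, ∑ j, f a b i j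
      = ∑ a, ∑ i, ∑ b, ∑ j, f a b i j :=
        Finset.sum_congr rfl fun a _ => Finset.sum_comm
    _ = ∑ i, ∑ a, ∑ b, ∑ j, f a b i j := Finset.sum_comm
    _ = ∑ i, ∑ a, ∑ j, ∑ b, f a b i j :=
        Finset.sum_congr rfl fun i _ => Finset.sum_congr rfl fun a _ => Finset.sum_comm
    _ = ∑ i, ∑ j, ∑ a, ∑ b, f a b i j :=
        Finset.sum_congr rfl fun i _ => Finset.sum_comm

variable {a b m : ℕ}

lemma fip_comm (A B : Matrix (Fin a) (Fin b) ℝ) : fip A B = fip B A := by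
  simp [fip, mul_comm]

lemma fip_add_right (A B C : Matrix (Fin a) (Fin b) ℝ) :
    fip A (B + C) = fip A B + fip A C := by
  simp [fip, Matrix.add_apply, mul_add, Finset.sum_add_distrib]

lemma fip_sub_right (A B C : Matrix (Fin a) (Fin b) ℝ) :
    fip A (B - C) = fip A B - fip A C := by
  simp [fip, Matrix.sub_apply, mul_sub, Finset.sum_sub_distrib]

lemma fip_smul_right (c : ℝ) (A B : Matrix (Fin a) (Fin b) ℝ) :
    fip A (c • B) = c * fip A B := by
  simp [fip, Matrix.smul_apply, smul_eq_mul, Finset.mul_sum, mul_left_comm]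

lemma fip_sub_left (A B C : Matrix (Fin a) (Fin b) ℝ) :
    fip (A - B) C = fip A C - fip B C := by
  rw [fip_comm, fip_sub_right, fip_comm C A, fip_comm C B]

lemma fip_smul_left (c : ℝ) (A B : Matrix (Fin a) (Fin b) ℝ) :
    fip (c • A) B = c * fip A B := by
  rw [fip_comm, fip_smul_right, fip_comm]

lemma fip_neg_right (A B : Matrix (Fin a) (Fin b) ℝ) : fip A (-B) = - fip A B := by
  simp [fip, Matrix.neg_apply]

lemma fip_zero_left (B : Matrix (Fin a) (Fin b) ℝ) :
    fip (0 : Matrix (Fin a) (Fin b) ℝ) B = 0 := by simp [fip]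

lemma fip_zero_right (A : Matrix (Fin a) (Fin b) ℝ) :
    fip A (0 : Matrix (Fin a) (Fin b) ℝ) = 0 := by simp [fip]

lemma fip_mul_left (A : Matrix (Fin a) (Fin m) ℝ) (C : Matrix (Fin m) (Fin b) ℝ)
    (B : Matrix (Fin a) (Fin b) ℝ) : fip (A * C) B = fip C (Aᵀ * B) := by
  have h1 : fip (A * C) B = ∑ i, ∑ j, ∑ k, A i k * C k j * B i j := by
    simp [fip, Matrix.mul_apply, Finset.sum_mul]
  have h2 : fip C (Aᵀ * B) = ∑ k, ∑ j, ∑ i, A i k * C k j * B i j := by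
    simp only [fip, Matrix.mul_apply, Matrix.transpose_apply, Finset.mul_sum]
    exact Finset.sum_congr rfl fun k _ => Finset.sum_congr rfl fun j _ =>
      Finset.sum_congr rfl fun i _ => by ring
  rw [h1, h2]; exact sum3_rot _

lemma fip_mul_t_right (A : Matrix (Fin a) (Fin b) ℝ) (B : Matrix (Fin a) (Fin m) ℝ)
    (C : Matrix (Fin b) (Fin m) ℝ) : fip A (B * Cᵀ) = fip (A * C) B := by
  have h1 : fip A (B * Cᵀ) = ∑ i, ∑ j, ∑ k, A i j * B i k * C j k := by
    simp only [fip, Matrix.mul_apply, Matrix.transpose_apply, Finset.mul_sum]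
    exact Finset.sum_congr rfl fun i _ => Finset.sum_congr rfl fun j _ =>
      Finset.sum_congr rfl fun k _ => by ring
  have h2 : fip (A * C) B = ∑ i, ∑ k, ∑ j, A i j * B i k * C j k := by
    simp only [fip, Matrix.mul_apply, Finset.sum_mul]
    exact Finset.sum_congr rfl fun i _ => Finset.sum_congr rfl fun k _ =>
      Finset.sum_congr rfl fun j _ => by ring
  rw [h1, h2]
  exact Finset.sum_congr rfl fun i _ => Finset.sum_comm

lemma fip_t_mul_right (A : Matrix (Fin a) (Fin b) ℝ) (B : Matrix (Fin a) (Fin m) ℝ)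
    (C : Matrix (Fin m) (Fin b) ℝ) : fip A (B * C) = fip (Bᵀ * A) C := by
  have h1 : fip A (B * C) = ∑ i, ∑ j, ∑ k, A i j * B i k * C k j := by
    simp only [fip, Matrix.mul_apply, Finset.mul_sum]
    exact Finset.sum_congr rfl fun i _ => Finset.sum_congr rfl fun j _ =>
      Finset.sum_congr rfl fun k _ => by ring
  have h2 : fip (Bᵀ * A) C = ∑ k, ∑ j, ∑ i, A i j * B i k * C k j := by
    simp only [fip, Matrix.mul_apply, Matrix.transpose_apply, Finset.sum_mul]
    exact Finset.sum_congr rfl fun k _ => Finset.sum_congr rfl fun j _ =>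
      Finset.sum_congr rfl fun i _ => by ring
  rw [h1, h2]; exact sum3_rot _

lemma quadform_eq (A : Matrix (Fin a) (Fin a) ℝ) (v : Fin a → ℝ) :
    ∑ i, ∑ j, A i j * v i * v j = v ⬝ᵥ A *ᵥ v := by
  simp only [dotProduct, Matrix.mulVec, Finset.mul_sum]
  exact Finset.sum_congr rfl fun i _ => Finset.sum_congr rfl fun j _ => by ring

lemma frobSq_eq_fip (A : Matrix (Fin a) (Fin b) ℝ) : frobSq A = fip A A := by
  simp [frobSq, fip, pow_two]

lemma frobSq_nonneg (A : Matrix (Fin a) (Fin b) ℝ) : 0 ≤ frobSq A :=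
  Finset.sum_nonneg fun i _ => Finset.sum_nonneg fun j _ => sq_nonneg _

lemma frobSq_add (A B : Matrix (Fin a) (Fin b) ℝ) :
    frobSq (A + B) = frobSq A + 2 * fip A B + frobSq B := by
  have h : ∀ i j, (A i j + B i j) ^ 2
      = A i j ^ 2 + 2 * (A i j * B i j) + B i j ^ 2 := fun i j => by ring
  simp only [frobSq, fip, Matrix.add_apply, h, Finset.sum_add_distrib, Finset.mul_sum]

lemma frobSq_sub (A B : Matrix (Fin a) (Fin b) ℝ) :
    frobSq (A - B) = frobSq A - 2 * fip A B + frobSq B := by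
  have h : ∀ i j, (A i j - B i j) ^ 2
      = A i j ^ 2 - 2 * (A i j * B i j) + B i j ^ 2 := fun i j => by ring
  simp only [frobSq, fip, Matrix.sub_apply, h, Finset.sum_add_distrib,
    Finset.sum_sub_distrib, Finset.mul_sum]

lemma frobSq_neg (A : Matrix (Fin a) (Fin b) ℝ) : frobSq (-A) = frobSq A := by
  simp [frobSq]

lemma frobSq_zero : frobSq (0 : Matrix (Fin a) (Fin b) ℝ) = 0 := by simp [frobSq]

lemma gram_apply {k : ℕ} (A : Matrix (Fin a) (Fin k) ℝ) (i j : Fin a) :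
    (A * Aᵀ) i j = rip A i j := by
  simp [Matrix.mul_apply, rip, Matrix.transpose_apply]

lemma rip_comm {k : ℕ} (A : Matrix (Fin a) (Fin k) ℝ) (i j : Fin a) :
    rip A i j = rip A j i := by simp [rip, mul_comm]

lemma fip_gram {k : ℕ} (S : Matrix (Fin a) (Fin a) ℝ) (A : Matrix (Fin a) (Fin k) ℝ) :
    fip S (A * Aᵀ) = ∑ i, ∑ j, S i j * rip A i j := by
  simp [fip, gram_apply]

lemma mip_eq_fip {k : ℕ} (A B : Matrix (Fin k) (Fin k) ℝ) : mip A B = fip A B := by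
  have h : mip A B = ∑ i, ∑ j, A j i * B j i := by
    simp [mip, Matrix.trace, Matrix.diag, Matrix.mul_apply, mul_comm]
  rw [h, fip]; exact Finset.sum_comm

lemma dp_self_nonneg {k : ℕ} (v : Fin k → ℝ) : 0 ≤ v ⬝ᵥ v :=
  Finset.sum_nonneg fun i _ => mul_self_nonneg (v i)

lemma posdef_aux {m k : ℕ} (F : Matrix (Fin m) (Fin k) ℝ) {c : ℝ} (hc : 0 < c) :
    (c • (1 : Matrix (Fin k) (Fin k) ℝ) + Fᵀ * F).PosDef := by
  rw [Matrix.posDef_iff_dotProduct_mulVec]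
  constructor
  · unfold Matrix.IsHermitian
    rw [conjTranspose_eq_transpose_of_trivial]
    simp [Matrix.transpose_add, Matrix.transpose_smul, Matrix.transpose_mul]
  · intro x hx
    have h1 : star x ⬝ᵥ (c • (1 : Matrix (Fin k) (Fin k) ℝ) + Fᵀ * F) *ᵥ x
        = c * (x ⬝ᵥ x) + (F *ᵥ x) ⬝ᵥ (F *ᵥ x) := by
      simp only [star_trivial, add_mulVec, smul_mulVec, one_mulVec, dotProduct_add,
        dotProduct_smul, smul_eq_mul, ← mulVec_mulVec, dotProduct_mulVec, vecMul_transpose]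
    rw [h1]
    have h2 : 0 < x ⬝ᵥ x :=
      lt_of_le_of_ne (dp_self_nonneg x) (fun h => hx (dotProduct_self_eq_zero.mp h.symm))
    nlinarith [dp_self_nonneg (F *ᵥ x)]

/-- sum of quadratic forms of a PSD-style matrix is nonneg -/
lemma quad_sum_nonneg {k : ℕ} {ι : Type*} [Fintype ι] (A : Matrix (Fin k) (Fin k) ℝ)
    (hA : ∀ v : Fin k → ℝ, 0 ≤ ∑ i, ∑ j, A i j * v i * v j)
    (g : ι → Fin k → ℝ) :
    0 ≤ ∑ i, ∑ j, A i j * (∑ t, g t i * g t j) := by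
  have h1 : ∑ i, ∑ j, A i j * (∑ t, g t i * g t j)
      = ∑ i, ∑ j, ∑ t, A i j * g t i * g t j := by
    refine Finset.sum_congr rfl fun i _ => Finset.sum_congr rfl fun j _ => ?_
    rw [Finset.mul_sum]
    exact Finset.sum_congr rfl fun t _ => by ring
  rw [h1, sum3_rot]
  refine Finset.sum_nonneg fun t _ => ?_
  exact (hA (g t)).trans_eq Finset.sum_comm

lemma row_cs {k : ℕ} (v u : Fin k → ℝ) (hu : ∑ t, (u t) ^ 2 = 1) {yi : ℝ} (hyi : 0 ≤ yi) :
    (Real.sqrt (∑ t, (v t) ^ 2) - yi) ^ 2 ≤ ∑ t, (v t - yi * u t) ^ 2 := by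
  set s := Real.sqrt (∑ t, (v t) ^ 2) with hs_def
  have hvnn : 0 ≤ ∑ t, (v t) ^ 2 := Finset.sum_nonneg fun t _ => sq_nonneg _
  have hs2 : s ^ 2 = ∑ t, (v t) ^ 2 := Real.sq_sqrt hvnn
  have hsnn : 0 ≤ s := Real.sqrt_nonneg _
  have hcs : ∑ t, v t * u t ≤ s := by
    have h1 : (∑ t, v t * u t) ^ 2 ≤ (∑ t, (v t) ^ 2) * ∑ t, (u t) ^ 2 :=
      Finset.sum_mul_sq_le_sq_mul_sq _ _ _
    calc ∑ t, v t * u t ≤ |∑ t, v t * u t| := le_abs_self _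
      _ = Real.sqrt ((∑ t, v t * u t) ^ 2) := (Real.sqrt_sq_eq_abs _).symm
      _ ≤ Real.sqrt (s ^ 2) := Real.sqrt_le_sqrt (by rw [hs2]; simpa [hu] using h1)
      _ = s := Real.sqrt_sq hsnn
  have hexp : ∑ t, (v t - yi * u t) ^ 2
      = s ^ 2 - 2 * yi * (∑ t, v t * u t) + yi ^ 2 := by
    have h : ∀ t, (v t - yi * u t) ^ 2
        = (v t) ^ 2 - 2 * yi * (v t * u t) + yi ^ 2 * (u t) ^ 2 := fun t => by ring
    simp only [h, Finset.sum_add_distrib, Finset.sum_sub_distrib, ← Finset.mul_sum, hs2, hu]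
    ring
  nlinarith [mul_le_mul_of_nonneg_left hcs hyi]

lemma sum_ite_diag {k : ℕ} (f : Fin k → ℝ) (g : Fin k → Fin k → ℝ) (i : Fin k) :
    ∑ j, (if i = j then f i else 0) * g i j = f i * g i i := by
  have h : ∀ j, (if i = j then f i else 0) * g i j = if i = j then f i * g i j else 0 :=
    fun j => by by_cases hh : i = j <;> simp [hh]
  rw [Finset.sum_congr rfl fun j _ => h j, Finset.sum_ite_eq]
  simp
/-- Landscape guarantee for second-order critical points of the nonconvex
PhaseCut formulation (real case, `p ≥ 2`). -/
theorem stmt6 {n d p r : ℕ} (hn : 0 < n) (hd : 0 < d) (hr : 0 < r) (hp : 2 ≤ p)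
    (F : Matrix (Fin n) (Fin d) ℝ) (lam : ℝ) (hlam : 0 < lam)
    (Xstar : Matrix (Fin d) (Fin r) ℝ) (ε : Fin n → ℝ)
    (y : Fin n → ℝ) (hy_def : ∀ i, y i = rowNorms (F * Xstar) i + ε i)
    (hy : ∀ i, 0 ≤ y i)
    (Ustar : Matrix (Fin n) (Fin r) ℝ)
    (hUstar : ∀ i, ∑ j, (Ustar i j) ^ 2 = 1)
    (hUstar_def : F * Xstar = Matrix.diagonal (rowNorms (F * Xstar)) * Ustar)
    (Xlam : Matrix (Fin d) (Fin r) ℝ)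
    (hXlam : Xlam = (((n:ℝ) * lam) • (1 : Matrix (Fin d) (Fin d) ℝ) + Fᵀ * F)⁻¹
        * Fᵀ * Matrix.diagonal y * Ustar)
    (Mlam : Matrix (Fin n) (Fin n) ℝ)
    (hMlam : Mlam = lam • (Matrix.diagonal y
        * (((n:ℝ) * lam) • (1 : Matrix (Fin n) (Fin n) ℝ) + F * Fᵀ)⁻¹
        * Matrix.diagonal y))
    (U : Matrix (Fin n) (Fin p) ℝ)
    (hU : ∀ i, ∑ j, (U i j) ^ 2 = 1)
    (S : Matrix (Fin n) (Fin n) ℝ)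
    (hS : S = Mlam - ddiag (Mlam * (U * Uᵀ)))
    -- first-order criticality (vanishing Riemannian gradient)
    (h1 : S * U = 0)
    -- second-order criticality (Riemannian Hessian PSD on the tangent space)
    (h2 : ∀ Udot : Matrix (Fin n) (Fin p) ℝ,
      (∀ i, (U * Udotᵀ + Udot * Uᵀ) i i = 0) → 0 ≤ mip S (Udot * Udotᵀ))
    (X : Matrix (Fin d) (Fin p) ℝ)
    (hX : X = (((n:ℝ) * lam) • (1 : Matrix (Fin d) (Fin d) ℝ) + Fᵀ * F)⁻¹
        * Fᵀ * Matrix.diagonal y * U) :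
    ∀ R : Matrix (Fin p) (Fin r) ℝ,
      (1 / (n:ℝ)) * vnormSq (rowNorms (F * X) - rowNorms (F * Xstar)) ≤
        (2 / (n:ℝ)) * vip ε (rowNorms (F * X) - rowNorms (F * Xstar))
        + lam * (frobSq Xstar - frobSq X)
        + (1 / ((p:ℝ) - 1)) *
            ((1 / (n:ℝ)) * frobSq (F * (Xlam - X * R))
              + lam * frobSq (Xlam - X * R)) := by
  intro R
  have hn' : (0:ℝ) < (n:ℝ) := by exact_mod_cast hn
  have hnne : (n:ℝ) ≠ 0 := ne_of_gt hn'
  set c : ℝ := (n:ℝ) * lam with hc_def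
  have hc : 0 < c := mul_pos hn' hlam
  set D : Matrix (Fin n) (Fin n) ℝ := Matrix.diagonal y with hD_def
  set Bd : Matrix (Fin d) (Fin d) ℝ := c • (1 : Matrix (Fin d) (Fin d) ℝ) + Fᵀ * F with hBd_def
  set Bn : Matrix (Fin n) (Fin n) ℝ := c • (1 : Matrix (Fin n) (Fin n) ℝ) + F * Fᵀ with hBn_def
  have hBdP : Bd.PosDef := posdef_aux F hc
  have hBnP : Bn.PosDef := by
    have h := posdef_aux Fᵀ hc
    rwa [Matrix.transpose_transpose] at h
  set K : Matrix (Fin d) (Fin d) ℝ := Bd⁻¹ with hK_def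
  set Q : Matrix (Fin n) (Fin n) ℝ := Bn⁻¹ with hQ_def
  have hBdK : Bd * K = 1 :=
    Matrix.mul_nonsing_inv _ ((Matrix.isUnit_iff_isUnit_det _).mp hBdP.isUnit)
  have hKBd : K * Bd = 1 :=
    Matrix.nonsing_inv_mul _ ((Matrix.isUnit_iff_isUnit_det _).mp hBdP.isUnit)
  have hBnQ : Bn * Q = 1 :=
    Matrix.mul_nonsing_inv _ ((Matrix.isUnit_iff_isUnit_det _).mp hBnP.isUnit)
  have hQBn : Q * Bn = 1 :=
    Matrix.nonsing_inv_mul _ ((Matrix.isUnit_iff_isUnit_det _).mp hBnP.isUnit)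
  have hBdT : Bdᵀ = Bd := by
    rw [hBd_def]
    simp [Matrix.transpose_add, Matrix.transpose_smul, Matrix.transpose_mul,
      Matrix.transpose_one, Matrix.transpose_transpose]
  have hBnT : Bnᵀ = Bn := by
    rw [hBn_def]
    simp [Matrix.transpose_add, Matrix.transpose_smul, Matrix.transpose_mul,
      Matrix.transpose_one, Matrix.transpose_transpose]
  have hKT : Kᵀ = K := by rw [hK_def, Matrix.transpose_nonsing_inv, hBdT]
  have hQT : Qᵀ = Q := by rw [hQ_def, Matrix.transpose_nonsing_inv, hBnT]
  have hDT : Dᵀ = D := by rw [hD_def, Matrix.diagonal_transpose]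
  have hKpsd : ∀ v : Fin d → ℝ, 0 ≤ ∑ i, ∑ j, K i j * v i * v j := by
    intro v
    rw [quadform_eq]
    simpa using (hBdP.inv).posSemidef.re_dotProduct_nonneg v
  have hFBd : F * Bd = Bn * F := by
    rw [hBd_def, hBn_def, Matrix.mul_add, Matrix.add_mul]
    congr 1
    · rw [Matrix.mul_smul, Matrix.smul_mul, Matrix.mul_one, Matrix.one_mul]
    · rw [← Matrix.mul_assoc]
  have hFK : F * K = Q * F := by
    have h1 : Bn * (F * K) = F := by
      rw [← Matrix.mul_assoc, ← hFBd, Matrix.mul_assoc, hBdK, Matrix.mul_one]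
    calc F * K = (Q * Bn) * (F * K) := by rw [hQBn, Matrix.one_mul]
      _ = Q * (Bn * (F * K)) := by rw [Matrix.mul_assoc]
      _ = Q * F := by rw [h1]
  have hKF : K * Fᵀ = Fᵀ * Q := by
    have h := congrArg Matrix.transpose hFK
    rw [Matrix.transpose_mul, Matrix.transpose_mul, hKT, hQT] at h
    exact h
  have hFFt : F * Fᵀ = Bn - c • 1 := by rw [hBn_def]; abel
  have hQ5 : F * K * Fᵀ = 1 - c • Q := by
    calc F * K * Fᵀ = Q * F * Fᵀ := by rw [hFK]
      _ = Q * (F * Fᵀ) := Matrix.mul_assoc _ _ _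
      _ = Q * (Bn - c • 1) := by rw [hFFt]
      _ = Q * Bn - c • (Q * 1) := by rw [Matrix.mul_sub, Matrix.mul_smul]
      _ = 1 - c • Q := by rw [hQBn, Matrix.mul_one]
  -- residual identity
  have hEmat : ∀ (k : ℕ) (V : Matrix (Fin n) (Fin k) ℝ),
      F * (K * (Fᵀ * (D * V))) - D * V = (-c) • (Q * (D * V)) := by
    intro k V
    have h1 : F * (K * (Fᵀ * (D * V))) = (F * K * Fᵀ) * (D * V) := by
      rw [Matrix.mul_assoc (F * K) _ _, Matrix.mul_assoc F K _]
    rw [h1, hQ5, Matrix.sub_mul, Matrix.one_mul, Matrix.smul_mul, neg_smul]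
    abel
  -- first-order optimality of the ridge solution
  have hopt : ∀ (k : ℕ) (V : Matrix (Fin n) (Fin k) ℝ),
      Fᵀ * (F * (K * (Fᵀ * (D * V))) - D * V) = (-c) • (K * (Fᵀ * (D * V))) := by
    intro k V
    have h1 : Fᵀ * (F * (K * (Fᵀ * (D * V)))) = (Fᵀ * F) * (K * (Fᵀ * (D * V))) :=
      (Matrix.mul_assoc _ _ _).symm
    have h2 : Fᵀ * F = Bd - c • 1 := by rw [hBd_def]; abel
    have h3 : Bd * (K * (Fᵀ * (D * V))) = Fᵀ * (D * V) := by
      rw [← Matrix.mul_assoc, hBdK, Matrix.one_mul]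
    rw [Matrix.mul_sub, h1, h2, Matrix.sub_mul, h3, Matrix.smul_mul, Matrix.one_mul, neg_smul]
    abel
  -- the fundamental quadratic decomposition
  have quad : ∀ (k : ℕ) (V : Matrix (Fin n) (Fin k) ℝ) (X' : Matrix (Fin d) (Fin k) ℝ),
      (1/(n:ℝ)) * frobSq (F * X' - D * V) + lam * frobSq X'
        = fip Mlam (V * Vᵀ)
          + ((1/(n:ℝ)) * frobSq (F * (X' - K * (Fᵀ * (D * V))))
            + lam * frobSq (X' - K * (Fᵀ * (D * V)))) := by
    intro k V X'
    set W : Matrix (Fin n) (Fin k) ℝ := D * V with hW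
    set XV : Matrix (Fin d) (Fin k) ℝ := K * (Fᵀ * W) with hXV
    set Z : Matrix (Fin d) (Fin k) ℝ := X' - XV with hZ
    set E : Matrix (Fin n) (Fin k) ℝ := F * XV - W with hE
    have e0 : F * X' - W = E + F * Z := by
      rw [hE, hZ, Matrix.mul_sub]; abel
    have e1 : X' = XV + Z := by rw [hZ]; abel
    have ex1 : frobSq (F * X' - W) = frobSq E + 2 * fip E (F * Z) + frobSq (F * Z) := by
      rw [e0, frobSq_add]
    have ex2 : frobSq X' = frobSq XV + 2 * fip XV Z + frobSq Z := by
      calc frobSq X' = frobSq (XV + Z) := by rw [← e1]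
        _ = _ := frobSq_add _ _
    have hFE : Fᵀ * E = (-c) • XV := hopt k V
    have cross : (1/(n:ℝ)) * (2 * fip E (F * Z)) + lam * (2 * fip XV Z) = 0 := by
      have hcr1 : fip E (F * Z) = fip Z (Fᵀ * E) := by rw [fip_comm, fip_mul_left]
      rw [hcr1, hFE, fip_smul_right, fip_comm XV Z, hc_def]
      field_simp
      ring
    have hE2 : E = (-c) • (Q * W) := hEmat k V
    have hFKKW : F * (K * (K * (Fᵀ * W))) = Q * W - c • (Q * (Q * W)) := by
      have h1 : K * (Fᵀ * W) = Fᵀ * (Q * W) := by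
        rw [← Matrix.mul_assoc, hKF, Matrix.mul_assoc]
      have h2 : K * (K * (Fᵀ * W)) = Fᵀ * (Q * (Q * W)) := by
        rw [h1, ← Matrix.mul_assoc, hKF, Matrix.mul_assoc]
      rw [h2, ← Matrix.mul_assoc, hFFt, Matrix.sub_mul, Matrix.smul_mul, Matrix.one_mul,
        ← Matrix.mul_assoc, hBnQ, Matrix.one_mul]
    have hval : (1/(n:ℝ)) * frobSq E + lam * frobSq XV = fip Mlam (V * Vᵀ) := by
      have hv1 : frobSq E = c * (c * fip W (Q * (Q * W))) := by
        rw [frobSq_eq_fip, hE2, fip_smul_left, fip_smul_right]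
        have : fip (Q * W) (Q * W) = fip W (Q * (Q * W)) := by
          rw [fip_mul_left, hQT]
        rw [this]; ring
      have hv2 : frobSq XV = fip W (Q * W) - c * fip W (Q * (Q * W)) := by
        rw [frobSq_eq_fip, hXV]
        rw [fip_mul_left, hKT]
        rw [fip_mul_left, Matrix.transpose_transpose]
        rw [hFKKW, fip_sub_right, fip_smul_right]
      have hv3 : fip Mlam (V * Vᵀ) = lam * fip W (Q * W) := by
        rw [fip_mul_t_right]
        have hMV : Mlam * V = lam • (D * (Q * W)) := by
          rw [hMlam, Matrix.smul_mul]
          congr 1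
          rw [Matrix.mul_assoc (D * Q) D V, Matrix.mul_assoc D Q (D * V)]
        rw [hMV, fip_smul_left]
        have : fip (D * (Q * W)) V = fip (Q * W) (D * V) := by
          rw [fip_mul_left, hDT]
        rw [this, fip_comm]
      rw [hv1, hv2, hv3, hc_def]
      field_simp
      ring
    calc (1/(n:ℝ)) * frobSq (F * X' - D * V) + lam * frobSq X'
        = (1/(n:ℝ)) * (frobSq E + 2 * fip E (F * Z) + frobSq (F * Z))
          + lam * (frobSq XV + 2 * fip XV Z + frobSq Z) := by rw [← ex1, ← ex2]
      _ = ((1/(n:ℝ)) * frobSq E + lam * frobSq XV)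
          + ((1/(n:ℝ)) * (2 * fip E (F * Z)) + lam * (2 * fip XV Z))
          + ((1/(n:ℝ)) * frobSq (F * Z) + lam * frobSq Z) := by ring
      _ = fip Mlam (V * Vᵀ) + ((1/(n:ℝ)) * frobSq (F * Z) + lam * frobSq Z) := by
          rw [hval, cross]; ring
  -- ==== scalar notation ====
  set W : Matrix (Fin n) (Fin r) ℝ := U * R with hWdef
  set Dl : Matrix (Fin n) (Fin r) ℝ := Ustar - W with hDldef
  set sig : Fin n → ℝ := fun i => (Mlam * (U * Uᵀ)) i i with hsig_def
  have hUU : ∀ i, ∑ t, U i t * U i t = 1 := fun i => by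
    have h := hU i; simpa [pow_two] using h
  have hUstarUU : ∀ i, ∑ t, Ustar i t * Ustar i t = 1 := fun i => by
    have h := hUstar i; simpa [pow_two] using h
  have hripU : ∀ i, rip U i i = 1 := fun i => hUU i
  have hripUstar : ∀ i, rip Ustar i i = 1 := fun i => hUstarUU i
  have hMT : Mlamᵀ = Mlam := by
    rw [hMlam, Matrix.transpose_smul]
    congr 1
    rw [Matrix.transpose_mul, Matrix.transpose_mul, hDT, hQT, Matrix.mul_assoc]
  have hST : Sᵀ = S := by
    rw [hS, Matrix.transpose_sub, hMT]
    congr 1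
    show (ddiag (Mlam * (U * Uᵀ)))ᵀ = ddiag (Mlam * (U * Uᵀ))
    rw [ddiag, Matrix.diagonal_transpose]
  have hMU : Mlam * U = Matrix.diagonal sig * U := by
    have h0 : Mlam * U - ddiag (Mlam * (U * Uᵀ)) * U = 0 := by
      rw [← Matrix.sub_mul, ← hS, h1]
    have h0' : Mlam * U = ddiag (Mlam * (U * Uᵀ)) * U := sub_eq_zero.mp h0
    exact h0'
  -- S-inner product with the Gram matrix of Dl equals that with Ustar's
  have hfipSgram : fip S (Dl * Dlᵀ) = fip S (Ustar * Ustarᵀ) := by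
    have hgram : Dl * Dlᵀ = Ustar * Ustarᵀ - Ustar * Wᵀ - W * Ustarᵀ + W * Wᵀ := by
      rw [hDldef, Matrix.transpose_sub, Matrix.mul_sub, Matrix.sub_mul, Matrix.sub_mul]
      abel
    have hz1 : S * W = 0 := by rw [hWdef, ← Matrix.mul_assoc, h1, Matrix.zero_mul]
    have hz2 : Wᵀ * S = 0 := by
      have h := congrArg Matrix.transpose hz1
      rw [Matrix.transpose_mul, hST, Matrix.transpose_zero] at h
      exact h
    rw [hgram, fip_add_right, fip_sub_right, fip_sub_right]
    have e1 : fip S (Ustar * Wᵀ) = 0 := by rw [fip_mul_t_right, hz1, fip_zero_left]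
    have e2 : fip S (W * Ustarᵀ) = 0 := by rw [fip_t_mul_right, hz2, fip_zero_left]
    have e3 : fip S (W * Wᵀ) = 0 := by rw [fip_mul_t_right, hz1, fip_zero_left]
    rw [e1, e2, e3]
    ring
  have hAsig : fip Mlam (U * Uᵀ) = ∑ i, sig i := by
    rw [fip_gram]
    refine Finset.sum_congr rfl fun i _ => ?_
    show ∑ j, Mlam i j * rip U i j = (Mlam * (U * Uᵀ)) i i
    rw [Matrix.mul_apply]
    refine Finset.sum_congr rfl fun j _ => ?_
    rw [gram_apply, rip_comm]
  have hBA : fip S (Ustar * Ustarᵀ) = fip Mlam (Ustar * Ustarᵀ) - ∑ i, sig i := by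
    rw [hS, fip_sub_left]
    congr 1
    show fip (ddiag (Mlam * (U * Uᵀ))) (Ustar * Ustarᵀ) = ∑ i, sig i
    rw [fip]
    refine Finset.sum_congr rfl fun i _ => ?_
    have hdd : ∀ j, (ddiag (Mlam * (U * Uᵀ))) i j = if i = j then sig i else 0 := by
      intro j; rw [ddiag, Matrix.diagonal_apply]
    calc ∑ j, (ddiag (Mlam * (U * Uᵀ))) i j * (Ustar * Ustarᵀ) i j
        = ∑ j, (if i = j then sig i * (Ustar * Ustarᵀ) i j else 0) := by
          refine Finset.sum_congr rfl fun j _ => ?_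
          rw [hdd j]
          by_cases h : i = j <;> simp [h]
      _ = sig i * (Ustar * Ustarᵀ) i i := by rw [Finset.sum_ite_eq]; simp
      _ = sig i := by rw [gram_apply, hripUstar, mul_one]
  -- ==== second-order criticality, averaged over coordinate directions ====
  have key2 : 0 ≤ ((p:ℝ) - 2) * (∑ i, ∑ j, S i j * rip Dl i j)
      + ∑ i, ∑ j, S i j * (rip Dl i j * (rip U i j * rip U i j)) := by
    set Ud : Fin r → Fin p → Matrix (Fin n) (Fin p) ℝ :=
      fun aa bb => Matrix.of fun i l =>
        Dl i aa * ((if l = bb then 1 else 0) - U i bb * U i l) with hUd_def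
    have hUd_app : ∀ aa bb i l,
        Ud aa bb i l = Dl i aa * ((if l = bb then 1 else 0) - U i bb * U i l) :=
      fun aa bb i l => rfl
    have hsum0 : ∀ aa bb i, ∑ l, U i l * Ud aa bb i l = 0 := by
      intro aa bb i
      have hterm : ∀ l, U i l * Ud aa bb i l
          = Dl i aa * (if l = bb then U i l else 0)
            - Dl i aa * U i bb * (U i l * U i l) := by
        intro l; rw [hUd_app]
        by_cases h : l = bb <;> simp [h] <;> ring
      rw [Finset.sum_congr rfl fun l _ => hterm l, Finset.sum_sub_distrib,
        ← Finset.mul_sum, ← Finset.mul_sum, Finset.sum_ite_eq', hUU i]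
      simp
    have htang : ∀ aa bb i, (U * (Ud aa bb)ᵀ + (Ud aa bb) * Uᵀ) i i = 0 := by
      intro aa bb i
      have hrw : (U * (Ud aa bb)ᵀ + (Ud aa bb) * Uᵀ) i i
          = (∑ l, U i l * Ud aa bb i l) + ∑ l, Ud aa bb i l * U i l := by
        simp [Matrix.add_apply, Matrix.mul_apply, Matrix.transpose_apply]
      have hsw : ∑ l, Ud aa bb i l * U i l = ∑ l, U i l * Ud aa bb i l :=
        Finset.sum_congr rfl fun l _ => mul_comm _ _
      rw [hrw, hsw, hsum0]
      ring
    have hnn : ∀ aa bb, 0 ≤ fip S (Ud aa bb * (Ud aa bb)ᵀ) := by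
      intro aa bb
      rw [← mip_eq_fip]
      exact h2 (Ud aa bb) (htang aa bb)
    have hbig : 0 ≤ ∑ aa, ∑ bb, fip S (Ud aa bb * (Ud aa bb)ᵀ) :=
      Finset.sum_nonneg fun aa _ => Finset.sum_nonneg fun bb _ => hnn aa bb
    have hripUd : ∀ i j, ∑ aa, ∑ bb, rip (Ud aa bb) i j
        = rip Dl i j * (((p:ℝ) - 2) + rip U i j * rip U i j) := by
      intro i j
      have hS1 : ∀ aa bb, rip (Ud aa bb) i j
          = Dl i aa * Dl j aa *
            (1 - U j bb * U j bb - U i bb * U i bb + U i bb * U j bb * rip U i j) := by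
        intro aa bb
        have hterm : ∀ t, Ud aa bb i t * Ud aa bb j t
            = Dl i aa * Dl j aa *
              (((if t = bb then (1:ℝ) else 0) - (if t = bb then U j bb * U j t else 0))
                - (if t = bb then U i bb * U i t else 0)
                + U i bb * U j bb * (U i t * U j t)) := by
          intro t; rw [hUd_app, hUd_app]
          by_cases h : t = bb <;> simp [h] <;> ring
        show ∑ t, Ud aa bb i t * Ud aa bb j t = _
        rw [Finset.sum_congr rfl fun t _ => hterm t, ← Finset.mul_sum]
        congr 1
        rw [Finset.sum_add_distrib, Finset.sum_sub_distrib, Finset.sum_sub_distrib,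
          Finset.sum_ite_eq', Finset.sum_ite_eq', Finset.sum_ite_eq', ← Finset.mul_sum]
        have hh : (U i bb * U j bb) * (∑ t, U i t * U j t)
            = U i bb * U j bb * rip U i j := rfl
        simp [rip]
      rw [Finset.sum_congr rfl fun aa _ => Finset.sum_congr rfl fun bb _ => hS1 aa bb]
      have hg : ∑ bb, (1 - U j bb * U j bb - U i bb * U i bb
            + U i bb * U j bb * rip U i j)
          = ((p:ℝ) - 2) + rip U i j * rip U i j := by
        have hgt : ∀ bb : Fin p, (1 - U j bb * U j bb - U i bb * U i bb
              + U i bb * U j bb * rip U i j)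
            = 1 - U j bb * U j bb - U i bb * U i bb + (U i bb * U j bb) * rip U i j :=
          fun bb => by ring
        rw [Finset.sum_congr rfl fun bb _ => hgt bb, Finset.sum_add_distrib,
          Finset.sum_sub_distrib, Finset.sum_sub_distrib, Finset.sum_const, hUU i, hUU j,
          ← Finset.sum_mul]
        have : (∑ bb, U i bb * U j bb) = rip U i j := rfl
        rw [this]
        simp [Finset.card_univ]
        ring
      calc ∑ aa, ∑ bb, Dl i aa * Dl j aa *
            (1 - U j bb * U j bb - U i bb * U i bb + U i bb * U j bb * rip U i j)
          = ∑ aa, Dl i aa * Dl j aa *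
            (∑ bb, (1 - U j bb * U j bb - U i bb * U i bb
              + U i bb * U j bb * rip U i j)) := by
            exact Finset.sum_congr rfl fun aa _ => (Finset.mul_sum _ _ _).symm
        _ = ∑ aa, Dl i aa * Dl j aa * (((p:ℝ) - 2) + rip U i j * rip U i j) := by
            rw [hg]
        _ = rip Dl i j * (((p:ℝ) - 2) + rip U i j * rip U i j) :=
            (Finset.sum_mul _ _ _).symm
    have hsum_eq : ∑ aa, ∑ bb, fip S (Ud aa bb * (Ud aa bb)ᵀ)
        = ((p:ℝ) - 2) * (∑ i, ∑ j, S i j * rip Dl i j)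
          + ∑ i, ∑ j, S i j * (rip Dl i j * (rip U i j * rip U i j)) := by
      rw [Finset.sum_congr rfl fun aa _ => Finset.sum_congr rfl fun bb _ =>
        fip_gram S (Ud aa bb)]
      rw [sum4_swap]
      have hpt : ∀ i j, ∑ aa, ∑ bb, S i j * rip (Ud aa bb) i j
          = ((p:ℝ) - 2) * (S i j * rip Dl i j)
            + S i j * (rip Dl i j * (rip U i j * rip U i j)) := by
        intro i j
        have h' : ∑ aa, ∑ bb, S i j * rip (Ud aa bb) i j
            = S i j * ∑ aa, ∑ bb, rip (Ud aa bb) i j := by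
          rw [Finset.mul_sum]
          exact Finset.sum_congr rfl fun aa _ => (Finset.mul_sum _ _ _).symm
        rw [h', hripUd]
        ring
      rw [Finset.sum_congr rfl fun i _ => Finset.sum_congr rfl fun j _ => hpt i j]
      rw [Finset.sum_congr rfl fun i _ => Finset.sum_add_distrib, Finset.sum_add_distrib,
        Finset.mul_sum]
      congr 1
      exact Finset.sum_congr rfl fun i _ => (Finset.mul_sum _ _ _).symm
    rw [hsum_eq] at hbig
    exact hbig
  -- ==== PSD bound on the Hadamard part ====
  have hNquad : ∀ v : Fin n → ℝ,
      0 ≤ ∑ i, ∑ j, (D * (F * K * Fᵀ) * D) i j * v i * v j := by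
    intro v
    rw [quadform_eq]
    have hmv : (D * (F * K * Fᵀ) * D) *ᵥ v
        = D *ᵥ (F *ᵥ (K *ᵥ (Fᵀ *ᵥ (D *ᵥ v)))) := by
      rw [Matrix.mulVec_mulVec, Matrix.mulVec_mulVec, Matrix.mulVec_mulVec,
        Matrix.mulVec_mulVec]
      congr 1
      simp only [Matrix.mul_assoc]
    rw [hmv]
    have hdp1 : ∀ z : Fin n → ℝ, v ⬝ᵥ (D *ᵥ z) = (D *ᵥ v) ⬝ᵥ z := by
      intro z
      rw [hD_def]
      simp only [dotProduct, Matrix.mulVec_diagonal]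
      exact Finset.sum_congr rfl fun x _ => by ring
    have hdp2 : ∀ (u : Fin n → ℝ) (t : Fin d → ℝ), u ⬝ᵥ (F *ᵥ t) = (Fᵀ *ᵥ u) ⬝ᵥ t := by
      intro u t
      rw [dotProduct_mulVec]
      congr 1
      rw [← Matrix.transpose_transpose F, Matrix.vecMul_transpose, Matrix.transpose_transpose]
    rw [hdp1, hdp2]
    have := hKpsd (Fᵀ *ᵥ (D *ᵥ v))
    rw [quadform_eq] at this
    exact this
  have hMentry : ∀ i j, Mlam i j
      = (1/(n:ℝ)) * ((D * D) i j - (D * (F * K * Fᵀ) * D) i j) := by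
    have hMn : (n:ℝ) • Mlam = D * D - D * (F * K * Fᵀ) * D := by
      rw [hMlam, smul_smul, ← hc_def]
      have h1' : c • (D * Q * D) = D * (c • Q) * D := by
        rw [Matrix.mul_smul, Matrix.smul_mul]
      have h2' : c • Q = 1 - F * K * Fᵀ := by rw [hQ5]; abel
      rw [h1', h2', Matrix.mul_sub, Matrix.mul_one, Matrix.sub_mul]
    intro i j
    have h' : (n:ℝ) * Mlam i j = (D * D) i j - (D * (F * K * Fᵀ) * D) i j :=
      congrFun (congrFun hMn i) j
    rw [← h']
    field_simp
  -- ==== the key Hadamard-product upper bound ====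
  have hT2 : ∑ i, ∑ j, S i j * (rip Dl i j * (rip U i j * rip U i j))
      ≤ (1/(n:ℝ)) * (∑ i, y i * y i * rip Dl i i) - ∑ i, sig i * rip Dl i i := by
    have hSentry : ∀ i j, S i j = Mlam i j - (if i = j then sig i else 0) := by
      intro i j
      rw [hS, Matrix.sub_apply]
      congr 1
    have hsplit : ∑ i, ∑ j, S i j * (rip Dl i j * (rip U i j * rip U i j))
        = (∑ i, ∑ j, Mlam i j * (rip Dl i j * (rip U i j * rip U i j)))
          - ∑ i, sig i * rip Dl i i := by
      rw [Finset.sum_congr rfl fun i _ => Finset.sum_congr rfl (fun j _ => by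
        rw [hSentry i j, sub_mul])]
      rw [Finset.sum_congr rfl fun i (_ : i ∈ Finset.univ) => Finset.sum_sub_distrib _ _,
        Finset.sum_sub_distrib]
      congr 1
      refine Finset.sum_congr rfl fun i _ => ?_
      rw [sum_ite_diag sig (fun i j => rip Dl i j * (rip U i j * rip U i j)) i, hripU]
      ring
    rw [hsplit]
    have hDDsum : ∑ i, ∑ j, (D * D) i j * (rip Dl i j * (rip U i j * rip U i j))
        = ∑ i, y i * y i * rip Dl i i := by
      refine Finset.sum_congr rfl fun i _ => ?_
      have hDD : ∀ j, (D * D) i j = if i = j then y i * y i else 0 := by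
        intro j
        rw [hD_def, Matrix.diagonal_mul_diagonal, Matrix.diagonal_apply]
      rw [Finset.sum_congr rfl fun j _ => by rw [hDD j]]
      rw [sum_ite_diag (fun i => y i * y i) (fun i j => rip Dl i j * (rip U i j * rip U i j)) i,
        hripU]
      ring
    have hXdecomp : ∀ i j, rip Dl i j * (rip U i j * rip U i j)
        = ∑ t : Fin r × Fin p × Fin p,
            (Dl i t.1 * (U i t.2.1 * U i t.2.2)) * (Dl j t.1 * (U j t.2.1 * U j t.2.2)) := by
      intro i j
      rw [Fintype.sum_prod_type]
      have step2 : ∀ aa, (∑ t : Fin p × Fin p,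
            (Dl i aa * (U i t.1 * U i t.2)) * (Dl j aa * (U j t.1 * U j t.2)))
          = Dl i aa * Dl j aa * (rip U i j * rip U i j) := by
        intro aa
        rw [Fintype.sum_prod_type]
        have hrr : rip U i j * rip U i j
            = ∑ bb, ∑ cc, (U i bb * U j bb) * (U i cc * U j cc) :=
          Finset.sum_mul_sum _ _ _ _
        rw [hrr, Finset.mul_sum]
        refine Finset.sum_congr rfl fun bb _ => ?_
        rw [Finset.mul_sum]
        exact Finset.sum_congr rfl fun cc _ => by ring
      rw [Finset.sum_congr rfl fun aa _ => step2 aa]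
      exact Finset.sum_mul _ _ _
    have hNpos : 0 ≤ ∑ i, ∑ j, (D * (F * K * Fᵀ) * D) i j
        * (rip Dl i j * (rip U i j * rip U i j)) := by
      rw [Finset.sum_congr rfl fun i _ => Finset.sum_congr rfl (fun j _ => by
        rw [hXdecomp i j])]
      exact quad_sum_nonneg _ hNquad _
    have hMsum : ∑ i, ∑ j, Mlam i j * (rip Dl i j * (rip U i j * rip U i j))
        = (1/(n:ℝ)) * ((∑ i, ∑ j, (D * D) i j * (rip Dl i j * (rip U i j * rip U i j)))
          - ∑ i, ∑ j, (D * (F * K * Fᵀ) * D) i j * (rip Dl i j * (rip U i j * rip U i j))) := by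
      have per : ∀ i j, Mlam i j * (rip Dl i j * (rip U i j * rip U i j))
          = (1/(n:ℝ)) * ((D * D) i j * (rip Dl i j * (rip U i j * rip U i j)))
            - (1/(n:ℝ)) * ((D * (F * K * Fᵀ) * D) i j
              * (rip Dl i j * (rip U i j * rip U i j))) := by
        intro i j; rw [hMentry i j]; ring
      rw [Finset.sum_congr rfl fun i (_ : i ∈ Finset.univ) =>
        Finset.sum_congr rfl fun j (_ : j ∈ Finset.univ) => per i j]
      simp only [Finset.sum_sub_distrib, ← Finset.mul_sum]
      ring
    rw [hMsum, hDDsum]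
    have hn1 : (0:ℝ) ≤ 1/(n:ℝ) := by positivity
    have hmul : (1/(n:ℝ)) * ((∑ i, y i * y i * rip Dl i i)
          - ∑ i, ∑ j, (D * (F * K * Fᵀ) * D) i j * (rip Dl i j * (rip U i j * rip U i j)))
        ≤ (1/(n:ℝ)) * (∑ i, y i * y i * rip Dl i i) :=
      mul_le_mul_of_nonneg_left (by linarith [hNpos]) hn1
    linarith [hmul]
  -- ==== value identity at X*R against Ustar ====
  have hXR : X * R = K * (Fᵀ * (D * W)) := by
    rw [hX, hWdef]
    simp only [Matrix.mul_assoc]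
  set EW : Matrix (Fin n) (Fin r) ℝ := F * (X * R) - D * W with hEW_def
  have hvalW : (1/(n:ℝ)) * frobSq EW + lam * frobSq (X * R)
      = fip Mlam (W * Wᵀ) := by
    have hq := quad r W (X * R)
    have hz : X * R - K * (Fᵀ * (D * W)) = 0 := by rw [hXR, sub_self]
    rw [hz] at hq
    rw [hEW_def]
    simpa [frobSq_zero, Matrix.mul_zero] using hq
  have hMW : Mlam * W = Matrix.diagonal sig * W := by
    rw [hWdef, ← Matrix.mul_assoc, hMU, Matrix.mul_assoc]
  have hfipMW : fip Mlam (W * Wᵀ) = ∑ i, sig i * rip W i i := by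
    rw [fip_mul_t_right, hMW, fip]
    refine Finset.sum_congr rfl fun i _ => ?_
    calc ∑ t, (Matrix.diagonal sig * W) i t * W i t
        = ∑ t, sig i * (W i t * W i t) := by
          refine Finset.sum_congr rfl fun t _ => ?_
          rw [Matrix.diagonal_mul]
          ring
      _ = sig i * rip W i i := (Finset.mul_sum _ _ _).symm
  have hEW2 : EW = (-c) • (Q * (D * W)) := by
    rw [hEW_def, hXR]
    exact hEmat r W
  have hDEW : D * EW = (-(n:ℝ)) • (Mlam * W) := by
    rw [hEW2, hMlam, Matrix.mul_smul, Matrix.smul_mul, smul_smul]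
    rw [show (D * Q * D) * W = D * (Q * (D * W)) from by simp only [Matrix.mul_assoc]]
    congr 1
    rw [hc_def]
    ring
  have hcross : fip EW (D * Dl) = (-(n:ℝ)) * (∑ i, sig i * (∑ t, Dl i t * W i t)) := by
    have hc1 : fip EW (D * Dl) = fip Dl (D * EW) := by
      rw [fip_comm, fip_mul_left, hDT]
    rw [hc1, hDEW, fip_smul_right, hMW]
    congr 1
    rw [fip]
    refine Finset.sum_congr rfl fun i _ => ?_
    calc ∑ t, Dl i t * (Matrix.diagonal sig * W) i t
        = ∑ t, sig i * (Dl i t * W i t) := by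
          refine Finset.sum_congr rfl fun t _ => ?_
          rw [Matrix.diagonal_mul]
          ring
      _ = sig i * ∑ t, Dl i t * W i t := (Finset.mul_sum _ _ _).symm
  have hfrobDDl : frobSq (D * Dl) = ∑ i, y i * y i * rip Dl i i := by
    rw [frobSq]
    refine Finset.sum_congr rfl fun i _ => ?_
    calc ∑ t, ((D * Dl) i t)^2 = ∑ t, (y i * y i) * (Dl i t * Dl i t) := by
          refine Finset.sum_congr rfl fun t _ => ?_
          rw [hD_def, Matrix.diagonal_mul]
          ring
      _ = y i * y i * rip Dl i i := (Finset.mul_sum _ _ _).symm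
  have hrowsplit : ∀ i, rip W i i + 2 * (∑ t, Dl i t * W i t) + rip Dl i i = 1 := by
    intro i
    have hterm : ∀ t, W i t * W i t + 2 * (Dl i t * W i t) + Dl i t * Dl i t
        = Ustar i t * Ustar i t := by
      intro t
      have h : Dl i t = Ustar i t - W i t := by rw [hDldef, Matrix.sub_apply]
      rw [h]
      ring
    have hsum := Finset.sum_congr rfl fun t (_ : t ∈ Finset.univ) => hterm t
    rw [Finset.sum_add_distrib, Finset.sum_add_distrib, ← Finset.mul_sum, hUstarUU i] at hsum
    exact hsum
  have hcomb : (∑ i, sig i * rip W i i)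
      + 2 * (∑ i, sig i * (∑ t, Dl i t * W i t))
      = (∑ i, sig i) - ∑ i, sig i * rip Dl i i := by
    have per : ∀ i, sig i * rip W i i + 2 * (sig i * (∑ t, Dl i t * W i t))
        = sig i - sig i * rip Dl i i := by
      intro i
      have h := hrowsplit i
      linear_combination (sig i) * h
    calc (∑ i, sig i * rip W i i) + 2 * (∑ i, sig i * (∑ t, Dl i t * W i t))
        = ∑ i, (sig i * rip W i i + 2 * (sig i * (∑ t, Dl i t * W i t))) := by
          rw [Finset.sum_add_distrib, Finset.mul_sum]
      _ = ∑ i, (sig i - sig i * rip Dl i i) :=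
          Finset.sum_congr rfl fun i _ => per i
      _ = (∑ i, sig i) - ∑ i, sig i * rip Dl i i := Finset.sum_sub_distrib _ _
  have hf7 : (1/(n:ℝ)) * frobSq (F * (X * R) - D * Ustar) + lam * frobSq (X * R)
      = (1/(n:ℝ)) * (∑ i, y i * y i * rip Dl i i) - ∑ i, sig i * rip Dl i i
        + ∑ i, sig i := by
    have hEd : F * (X * R) - D * Ustar = EW - D * Dl := by
      rw [hEW_def, hDldef, Matrix.mul_sub]
      abel
    rw [hEd, frobSq_sub, hcross, hfrobDDl]
    have hv : (1/(n:ℝ)) * frobSq EW + lam * frobSq (X * R) = ∑ i, sig i * rip W i i := by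
      rw [hvalW, hfipMW]
    have hc2 := hcomb
    field_simp at hv hc2 ⊢
    nlinarith [hv, hc2]
  -- ==== Pythagoras against Ustar: remainder form ====
  have hRem : (1/(n:ℝ)) * frobSq (F * (X * R) - D * Ustar) + lam * frobSq (X * R)
      = fip Mlam (Ustar * Ustarᵀ)
        + ((1/(n:ℝ)) * frobSq (F * (Xlam - X * R)) + lam * frobSq (Xlam - X * R)) := by
    have hq := quad r Ustar (X * R)
    have hXlam' : K * (Fᵀ * (D * Ustar)) = Xlam := by
      rw [hXlam]
      simp only [Matrix.mul_assoc]
    rw [hXlam'] at hq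
    have h1 : F * (X * R - Xlam) = -(F * (Xlam - X * R)) := by
      rw [← Matrix.mul_neg, neg_sub]
    have h2 : X * R - Xlam = -(Xlam - X * R) := (neg_sub _ _).symm
    rw [h1, frobSq_neg] at hq
    rw [h2, frobSq_neg] at hq
    exact hq
  -- ==== the Burer–Monteiro bound: (p-1)(Σ - B) ≤ Rem ====
  have hSD : ∑ i, ∑ j, S i j * rip Dl i j
      = fip Mlam (Ustar * Ustarᵀ) - ∑ i, sig i := by
    rw [← fip_gram, hfipSgram, hBA]
  have hRemge : ((p:ℝ) - 1) * ((∑ i, sig i) - fip Mlam (Ustar * Ustarᵀ))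
      ≤ (1/(n:ℝ)) * frobSq (F * (Xlam - X * R)) + lam * frobSq (Xlam - X * R) := by
    have hRem2 : (1/(n:ℝ)) * frobSq (F * (Xlam - X * R)) + lam * frobSq (Xlam - X * R)
        = (1/(n:ℝ)) * (∑ i, y i * y i * rip Dl i i) - ∑ i, sig i * rip Dl i i
          + ∑ i, sig i - fip Mlam (Ustar * Ustarᵀ) := by
      linarith [hRem, hf7]
    rw [hRem2]
    rw [hSD] at key2
    have hexp1 : ((p:ℝ) - 2) * (fip Mlam (Ustar * Ustarᵀ) - ∑ i, sig i)
        = -(((p:ℝ) - 2) * ((∑ i, sig i) - fip Mlam (Ustar * Ustarᵀ))) := by ring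
    have hexp2 : ((p:ℝ) - 1) * ((∑ i, sig i) - fip Mlam (Ustar * Ustarᵀ))
        = ((p:ℝ) - 2) * ((∑ i, sig i) - fip Mlam (Ustar * Ustarᵀ))
          + ((∑ i, sig i) - fip Mlam (Ustar * Ustarᵀ)) := by ring
    linarith [key2, hT2]
  -- ==== amplitude bounds ====
  have hrowCS : ∀ i, (rowNorms (F * X) i - y i)^2
      ≤ ∑ k, ((F * X) i k - y i * U i k)^2 :=
    fun i => row_cs (fun k => (F * X) i k) (fun k => U i k) (hU i) (hy i)
  have hfrobFXDU : frobSq (F * X - D * U) = ∑ i, ∑ k, ((F * X) i k - y i * U i k)^2 := by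
    rw [frobSq]
    refine Finset.sum_congr rfl fun i _ => Finset.sum_congr rfl fun k _ => ?_
    rw [Matrix.sub_apply, hD_def, Matrix.diagonal_mul]
  have hXU : X = K * (Fᵀ * (D * U)) := by
    rw [hX]
    simp only [Matrix.mul_assoc]
  have hvalU : (1/(n:ℝ)) * frobSq (F * X - D * U) + lam * frobSq X = ∑ i, sig i := by
    have hq := quad p U X
    rw [← hXU, sub_self] at hq
    simpa [frobSq_zero, Matrix.mul_zero, hAsig] using hq
  have hsum1 : ∑ i, (rowNorms (F * X) i - y i)^2 ≤ frobSq (F * X - D * U) := by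
    rw [hfrobFXDU]
    exact Finset.sum_le_sum fun i _ => hrowCS i
  have hepsq : ∑ i, (ε i)^2 = frobSq (F * Xstar - D * Ustar) := by
    rw [frobSq]
    refine Finset.sum_congr rfl fun i _ => ?_
    have hFX : ∀ k, (F * Xstar) i k = rowNorms (F * Xstar) i * Ustar i k := by
      intro k
      have h := congrFun (congrFun hUstar_def i) k
      rw [h, Matrix.diagonal_mul]
    have hee : rowNorms (F * Xstar) i - y i = -(ε i) := by
      rw [hy_def i]
      ring
    calc (ε i)^2 = ∑ k, (ε i)^2 * (Ustar i k * Ustar i k) := by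
          rw [← Finset.mul_sum, hUstarUU i, mul_one]
      _ = ∑ k, ((F * Xstar) i k - y i * Ustar i k)^2 := by
          refine Finset.sum_congr rfl fun k _ => ?_
          rw [hFX k]
          rw [show rowNorms (F * Xstar) i * Ustar i k - y i * Ustar i k
              = (rowNorms (F * Xstar) i - y i) * Ustar i k from by ring, hee]
          ring
      _ = ∑ k, ((F * Xstar - D * Ustar) i k)^2 := by
          refine Finset.sum_congr rfl fun k _ => ?_
          rw [Matrix.sub_apply, hD_def, Matrix.diagonal_mul]
  have hBle : fip Mlam (Ustar * Ustarᵀ)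
      ≤ (1/(n:ℝ)) * (∑ i, (ε i)^2) + lam * frobSq Xstar := by
    have hq := quad r Ustar Xstar
    rw [← hepsq] at hq
    have hn1' : (0:ℝ) ≤ 1/(n:ℝ) := by positivity
    have h0 : 0 ≤ (1/(n:ℝ)) * frobSq (F * (Xstar - K * (Fᵀ * (D * Ustar))))
        + lam * frobSq (Xstar - K * (Fᵀ * (D * Ustar))) :=
      add_nonneg (mul_nonneg hn1' (frobSq_nonneg _)) (mul_nonneg hlam.le (frobSq_nonneg _))
    linarith [hq]
  have hpoint : ∀ i, (rowNorms (F * X) i - rowNorms (F * Xstar) i)^2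
      - 2 * (ε i * (rowNorms (F * X) i - rowNorms (F * Xstar) i))
      = (rowNorms (F * X) i - y i)^2 - (ε i)^2 := by
    intro i
    rw [hy_def i]
    ring
  have hgoalLHS : vnormSq (rowNorms (F * X) - rowNorms (F * Xstar))
      - 2 * vip ε (rowNorms (F * X) - rowNorms (F * Xstar))
      = (∑ i, (rowNorms (F * X) i - y i)^2) - ∑ i, (ε i)^2 := by
    rw [vnormSq, vip, Finset.mul_sum, ← Finset.sum_sub_distrib, ← Finset.sum_sub_distrib]
    refine Finset.sum_congr rfl fun i _ => ?_
    rw [Pi.sub_apply]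
    exact hpoint i
  -- ==== final assembly ====
  have hp1 : (0:ℝ) < (p:ℝ) - 1 := by
    have h2p : (2:ℝ) ≤ (p:ℝ) := by exact_mod_cast hp
    linarith
  have hn1 : (0:ℝ) ≤ 1/(n:ℝ) := by positivity
  have h4 : (∑ i, sig i) - fip Mlam (Ustar * Ustarᵀ)
      ≤ (1/((p:ℝ)-1)) * ((1/(n:ℝ)) * frobSq (F * (Xlam - X * R))
        + lam * frobSq (Xlam - X * R)) := by
    rw [show (1/((p:ℝ)-1)) * ((1/(n:ℝ)) * frobSq (F * (Xlam - X * R))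
        + lam * frobSq (Xlam - X * R))
      = ((1/(n:ℝ)) * frobSq (F * (Xlam - X * R))
        + lam * frobSq (Xlam - X * R)) / ((p:ℝ)-1) from by ring]
    rw [le_div_iff₀ hp1]
    calc ((∑ i, sig i) - fip Mlam (Ustar * Ustarᵀ)) * ((p:ℝ)-1)
        = ((p:ℝ)-1) * ((∑ i, sig i) - fip Mlam (Ustar * Ustarᵀ)) := mul_comm _ _
      _ ≤ _ := hRemge
  have e0 : (1/(n:ℝ)) * vnormSq (rowNorms (F * X) - rowNorms (F * Xstar))
      - (2/(n:ℝ)) * vip ε (rowNorms (F * X) - rowNorms (F * Xstar))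
      = (1/(n:ℝ)) * (∑ i, (rowNorms (F * X) i - y i)^2)
        - (1/(n:ℝ)) * (∑ i, (ε i)^2) := by
    linear_combination (1/(n:ℝ)) * hgoalLHS
  have e1 : (1/(n:ℝ)) * (∑ i, (rowNorms (F * X) i - y i)^2)
      ≤ (∑ i, sig i) - lam * frobSq X := by
    have h := mul_le_mul_of_nonneg_left hsum1 hn1
    linarith [hvalU, h]
  linarith [e0, e1, hBle, h4]
end
end

section
/- Let n, p be positive integers, let M ∈ ℝ^{n×n} be symmetric, and let U ∈ ℝ^{n×p} have unit-norm rows (i.e., diag(U Uᵀ) = 𝟏). Set S(U) := M − ddiag(M U Uᵀ). Assume S(U)·U = 0 and that ⟨S(U), Ů Ůᵀ⟩ ≥ 0 for every Ů ∈ ℝ^{n×p} with diag(U Ůᵀ + Ů Uᵀ) = 0. Then for every z ∈ ℝⁿ: ⟨S(U), (p − 2)·z zᵀ + D_z (U Uᵀ)^{∘2} D_z⟩ ≥ 0, where D_z := diag(z) and (U Uᵀ)^{∘2} is the entrywise square of U Uᵀ. -/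
open Matrix Filter Finset
open scoped Classical

noncomputable section

/-!
Fix `z` and a coordinate `k`. Projecting `z_i e_k` onto the tangent space of the `i`-th sphere,
row by row, gives the tangent vector `V_k` with rows `z_i (e_k - U_{ik} u_i)`. Expanding,
`(V_k V_kᵀ)_{ij} = z_i z_j (1 - U_{ik}² - U_{jk}² + U_{ik} U_{jk} ⟨u_i, u_j⟩)`, and summing over `k`
with unit rows gives `∑_k V_k V_kᵀ = (p - 2) z zᵀ + D_z (U Uᵀ)^{∘2} D_z`. The claim is then a sum
of Hessian quadratic forms at tangent vectors, each nonnegative by second-order criticality.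
-/

variable {n p : ℕ}

def tangentDir (U : Matrix (Fin n) (Fin p) ℝ) (z : Fin n → ℝ) (k : Fin p) :
    Matrix (Fin n) (Fin p) ℝ :=
  of fun i l => z i * ((if l = k then 1 else 0) - U i k * U i l)

lemma mul_transpose_tangentDir_apply_self {U : Matrix (Fin n) (Fin p) ℝ}
    (hU : ∀ i, (U * Uᵀ) i i = 1) (z : Fin n → ℝ) (k : Fin p) (i : Fin n) :
    (U * (tangentDir U z k)ᵀ) i i = 0 := by
  have hrow : ∑ l, U i l * U i l = 1 := by simpa [mul_apply] using hU i
  simp only [mul_apply, transpose_apply, tangentDir, of_apply, mul_sub, mul_ite, mul_one,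
    mul_zero, sum_sub_distrib, sum_ite_eq', mem_univ, if_true]
  calc U i k * z i - ∑ l, U i l * (z i * (U i k * U i l))
      = U i k * z i * (1 - ∑ l, U i l * U i l) := by rw [mul_sub, mul_sum]; ring_nf
    _ = 0 := by rw [hrow, sub_self, mul_zero]

lemma isTangent_tangentDir {U : Matrix (Fin n) (Fin p) ℝ}
    (hU : ∀ i, (U * Uᵀ) i i = 1) (z : Fin n → ℝ) (k : Fin p) (i : Fin n) :
    (U * (tangentDir U z k)ᵀ + tangentDir U z k * Uᵀ) i i = 0 := by
  rw [Matrix.add_apply, ← transpose_apply (tangentDir U z k * Uᵀ), transpose_mul,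
    transpose_transpose, mul_transpose_tangentDir_apply_self hU, add_zero]

lemma tangentDir_mul_transpose_apply (U : Matrix (Fin n) (Fin p) ℝ) (z : Fin n → ℝ)
    (k : Fin p) (i j : Fin n) :
    (tangentDir U z k * (tangentDir U z k)ᵀ) i j
      = z i * z j * (1 - U i k ^ 2 - U j k ^ 2 + U i k * U j k * (U * Uᵀ) i j) := by
  have hterm : ∀ l, tangentDir U z k i l * tangentDir U z k j l
      = z i * z j * ((if l = k then 1 - U i k * U i k - U j k * U j k else 0)
          + U i k * U j k * (U i l * U j l)) := by
    intro l
    by_cases h : l = k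
    · subst h; simp only [tangentDir, of_apply, if_true]; ring
    · simp only [tangentDir, of_apply, h, if_false]; ring
  simp only [mul_apply, transpose_apply, hterm, ← mul_sum, sum_add_distrib, sum_ite_eq',
    mem_univ, if_true]
  ring

lemma sum_tangentDir_mul_transpose {U : Matrix (Fin n) (Fin p) ℝ}
    (hU : ∀ i, (U * Uᵀ) i i = 1) (z : Fin n → ℝ) :
    ∑ k, tangentDir U z k * (tangentDir U z k)ᵀ
      = ((p : ℝ) - 2) • vecMulVec z z + diagonal z * hadamard (U * Uᵀ) (U * Uᵀ) * diagonal z := by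
  have hsq : ∀ i, ∑ k, U i k ^ 2 = 1 := fun i => by simpa [mul_apply, sq] using hU i
  ext i j
  have hG : ∑ k, U i k * U j k = (U * Uᵀ) i j := by simp [mul_apply]
  calc (∑ k, tangentDir U z k * (tangentDir U z k)ᵀ) i j
      = z i * z j * ∑ k, (1 - U i k ^ 2 - U j k ^ 2 + U i k * U j k * (U * Uᵀ) i j) := by
        simp only [Matrix.sum_apply, tangentDir_mul_transpose_apply, mul_sum]
    _ = z i * z j * ((p : ℝ) - 2 + (U * Uᵀ) i j * (U * Uᵀ) i j) := by
        simp only [sum_add_distrib, sum_sub_distrib, ← sum_mul, hsq, hG, sum_const, card_univ,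
          Fintype.card_fin, nsmul_eq_mul, mul_one]
        ring
    _ = _ := by
        simp only [Matrix.add_apply, Matrix.smul_apply, vecMulVec_apply, mul_diagonal,
          diagonal_mul, hadamard_apply, smul_eq_mul]
        ring

lemma mip_sum {d : ℕ} {ι : Type*} (S : Matrix (Fin d) (Fin d) ℝ) (s : Finset ι)
    (A : ι → Matrix (Fin d) (Fin d) ℝ) :
    mip S (∑ k ∈ s, A k) = ∑ k ∈ s, mip S (A k) := by
  simp only [mip, transpose_sum, sum_mul, trace_sum]

theorem stmt8_general {n p : ℕ}
    (U : Matrix (Fin n) (Fin p) ℝ) (hU : ∀ i, (U * Uᵀ) i i = 1)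
    (S : Matrix (Fin n) (Fin n) ℝ)
    -- Riemannian Hessian PSD on the tangent space
    (h2 : ∀ Udot : Matrix (Fin n) (Fin p) ℝ,
      (∀ i, (U * Udotᵀ + Udot * Uᵀ) i i = 0) → 0 ≤ mip S (Udot * Udotᵀ)) :
    ∀ z : Fin n → ℝ,
      0 ≤ mip S (((p:ℝ) - 2) • Matrix.vecMulVec z z
          + Matrix.diagonal z * Matrix.hadamard (U * Uᵀ) (U * Uᵀ)
            * Matrix.diagonal z) := by
  intro z
  rw [← sum_tangentDir_mul_transpose hU, mip_sum]
  exact sum_nonneg fun k _ => h2 _ (isTangent_tangentDir hU z k)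

/-- Second-order critical points `U` of `min ⟨M, UUᵀ⟩` over the product of unit
spheres satisfy the key inequality used in the PhaseCut landscape analysis
(real case). -/
theorem stmt8 {n p : ℕ} (hn : 0 < n) (hp : 0 < p)
    (M : Matrix (Fin n) (Fin n) ℝ) (hM : M.IsSymm)
    (U : Matrix (Fin n) (Fin p) ℝ) (hU : ∀ i, (U * Uᵀ) i i = 1)
    (S : Matrix (Fin n) (Fin n) ℝ) (hS : S = M - ddiag (M * (U * Uᵀ)))
    -- vanishing Riemannian gradient
    (h1 : S * U = 0)
    -- Riemannian Hessian PSD on the tangent space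
    (h2 : ∀ Udot : Matrix (Fin n) (Fin p) ℝ,
      (∀ i, (U * Udotᵀ + Udot * Uᵀ) i i = 0) → 0 ≤ mip S (Udot * Udotᵀ)) :
    ∀ z : Fin n → ℝ,
      0 ≤ mip S (((p:ℝ) - 2) • Matrix.vecMulVec z z
          + Matrix.diagonal z * Matrix.hadamard (U * Uᵀ) (U * Uᵀ)
            * Matrix.diagonal z) :=
  stmt8_general U hU S h2
end
end

section
/- Let n, p be positive integers, let M ∈ ℂ^{n×n} be Hermitian, and let U ∈ ℂ^{n×p} have unit-norm rows (i.e., diag(U U^*) = 𝟏). Set S(U) := M − Re(ddiag(M U U^*)). Assume S(U)·U = 0 and that Re tr((Ů Ů^*)^* S(U)) ≥ 0 for every Ů ∈ ℂ^{n×p} with diag(U Ů^* + Ů U^*) = 0. Then for every z ∈ ℂⁿ: Re tr([(2p − 2)·z z^* + Re(D_z^* U U^* D_z) ∘ (U U^*)]^* S(U)) ≥ 0, where D_z := diag(z). -/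
open Matrix Filter Finset
open scoped Classical

noncomputable section

/-- Entrywise real part of a complex square matrix (as a complex matrix). -/
def reMat {n : ℕ} (A : Matrix (Fin n) (Fin n) ℂ) : Matrix (Fin n) (Fin n) ℂ :=
  Matrix.of fun i j => ((A i j).re : ℂ)

/-- `ddiag A` keeps the diagonal of `A`, setting off-diagonal entries to zero. -/
def ddiagC {n : ℕ} (A : Matrix (Fin n) (Fin n) ℂ) : Matrix (Fin n) (Fin n) ℂ :=
  Matrix.diagonal fun i => A i i

/-- Real trace pairing `⟨S, Q⟩ = Re tr(Q^* S)` of complex square matrices. -/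
def cmip {n : ℕ} (S Q : Matrix (Fin n) (Fin n) ℂ) : ℝ := ((Qᴴ * S).trace).re

/-!
Summing the second-order condition over a family of tangent directions. For `z ∈ ℂⁿ`, a column
index `α` and `c ∈ {1, i}`, project `V = c z e_αᵀ` row by row onto the tangent space at `U`:
`Ů = V - Re(ddiag(V U^*)) U`. Since `{1, i}` is a real orthonormal basis of `ℂ`, the identities
`∑_c Re(c a) c̄ = a` and `∑_c Re(c a) Re(c b) = Re(a b̄)` collapse `∑_{α,c} Ů Ů^*` to
`(2p - 2) z z^* + Re(D_z^* U U^* D_z) ∘ (U U^*)`, so the Hessian inequality for each `Ů`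
adds up to the claim.
-/

open Complex (basisOneI coe_basisOneI)

lemma sum_basisOneI_mul_conj : ∑ k, basisOneI k * star (basisOneI k) = 2 := by
  norm_num [coe_basisOneI, Fin.sum_univ_two]

lemma sum_re_basisOneI_mul_mul_conj (a : ℂ) :
    ∑ k, ((basisOneI k * a).re : ℂ) * star (basisOneI k) = a := by
  simp [coe_basisOneI, Fin.sum_univ_two]

lemma sum_basisOneI_mul_re_basisOneI_mul (b : ℂ) :
    ∑ k, basisOneI k * ((basisOneI k * b).re : ℂ) = star b := by
  simp [coe_basisOneI, Fin.sum_univ_two, Complex.ext_iff]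

lemma sum_re_basisOneI_mul_mul_re (a b : ℂ) :
    ∑ k, (basisOneI k * a).re * (basisOneI k * b).re = (a * star b).re := by
  simp [coe_basisOneI, Fin.sum_univ_two]

variable {n p : ℕ}

lemma reMat_ddiagC (A : Matrix (Fin n) (Fin n) ℂ) :
    reMat (ddiagC A) = diagonal fun i => ((A i i).re : ℂ) := by
  ext i j
  by_cases h : i = j <;> simp [reMat, ddiagC, diagonal_apply, h]

def tangentProj (U V : Matrix (Fin n) (Fin p) ℂ) : Matrix (Fin n) (Fin p) ℂ :=
  V - reMat (ddiagC (V * Uᴴ)) * U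

lemma mul_conjTranspose_add_apply_self (U W : Matrix (Fin n) (Fin p) ℂ) (i : Fin n) :
    (U * Wᴴ + W * Uᴴ) i i = 2 * ((W * Uᴴ) i i).re := by
  rw [Matrix.add_apply, ← conjTranspose_conjTranspose U, ← conjTranspose_mul,
    conjTranspose_conjTranspose, conjTranspose_apply, Complex.star_def, Complex.re_eq_add_conj]
  ring

lemma tangentProj_isTangent (U V : Matrix (Fin n) (Fin p) ℂ) (hU : ∀ i, (U * Uᴴ) i i = 1)
    (i : Fin n) : (U * (tangentProj U V)ᴴ + tangentProj U V * Uᴴ) i i = 0 := by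
  rw [mul_conjTranspose_add_apply_self, tangentProj, Matrix.sub_mul, Matrix.mul_assoc,
    reMat_ddiagC, Matrix.sub_apply, diagonal_mul, hU]
  simp

lemma tangentProj_mul_conjTranspose_apply (U V : Matrix (Fin n) (Fin p) ℂ) (i j : Fin n) :
    (tangentProj U V * (tangentProj U V)ᴴ) i j =
      (V * Vᴴ) i j - ((V * Uᴴ) i i).re * star ((V * Uᴴ) j i) - (V * Uᴴ) i j * ((V * Uᴴ) j j).re
        + ((V * Uᴴ) i i).re * ((V * Uᴴ) j j).re * (U * Uᴴ) i j := by
  set D := reMat (ddiagC (V * Uᴴ))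
  have hD : Dᴴ = D := by simp [D, reMat_ddiagC]
  have : tangentProj U V * (tangentProj U V)ᴴ =
      V * Vᴴ - D * (V * Uᴴ)ᴴ - V * Uᴴ * D + D * (U * Uᴴ) * D := by
    rw [tangentProj, conjTranspose_sub, conjTranspose_mul, hD, conjTranspose_mul,
      conjTranspose_conjTranspose]
    simp only [Matrix.sub_mul, Matrix.mul_sub, Matrix.mul_assoc]
    abel
  rw [this]
  simp only [D, reMat_ddiagC, Matrix.add_apply, Matrix.sub_apply, diagonal_mul, mul_diagonal,
    conjTranspose_apply]
  ring

lemma vecMulVec_single_mul_conjTranspose_apply (z : Fin n → ℂ) (α : Fin p) (c : ℂ)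
    (W : Matrix (Fin n) (Fin p) ℂ) (i j : Fin n) :
    (vecMulVec z (Pi.single α c) * Wᴴ) i j = c * (z i * star (W j α)) := by
  simp [mul_apply, vecMulVec_apply, Pi.single_apply]
  ring

lemma sum_basisOneI_gram_tangentProj_vecMulVec_single_apply (U : Matrix (Fin n) (Fin p) ℂ)
    (z : Fin n → ℂ) (α : Fin p) (i j : Fin n) :
    ∑ k, (tangentProj U (vecMulVec z (Pi.single α (basisOneI k))) *
        (tangentProj U (vecMulVec z (Pi.single α (basisOneI k))))ᴴ) i j =
      z i * star (z j) * (2 - U i α * star (U i α) - U j α * star (U j α))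
        + ((z i * star (z j) * (star (U i α) * U j α)).re : ℂ) * (U * Uᴴ) i j := by
  set a := z i * star (U i α)
  set b := z j * star (U j α)
  calc _ = ∑ k, (basisOneI k * star (basisOneI k) * (z i * star (z j))
          - ((basisOneI k * a).re : ℂ) * star (basisOneI k) * star (z j * star (U i α))
          - basisOneI k * ((basisOneI k * b).re : ℂ) * (z i * star (U j α))
          + (((basisOneI k * a).re * (basisOneI k * b).re : ℝ) : ℂ) * (U * Uᴴ) i j) := by
        refine Finset.sum_congr rfl fun k _ => ?_
        simp only [tangentProj_mul_conjTranspose_apply, vecMulVec_single_mul_conjTranspose_apply,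
          vecMulVec_apply, Pi.single_eq_same, star_mul', Complex.ofReal_mul, a, b]
        ring
    _ = _ := by
        have hab : a * star b = z i * star (z j) * (star (U i α) * U j α) := by
          simp only [a, b, star_mul', star_star]
          ring
        simp only [Finset.sum_add_distrib, Finset.sum_sub_distrib, ← Finset.sum_mul,
          ← Complex.ofReal_sum, sum_basisOneI_mul_conj, sum_re_basisOneI_mul_mul_conj,
          sum_basisOneI_mul_re_basisOneI_mul, sum_re_basisOneI_mul_mul_re, hab]
        simp only [a, b, star_mul', star_star]
        ring

lemma sum_gram_tangentProj_vecMulVec_single (U : Matrix (Fin n) (Fin p) ℂ)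
    (hU : ∀ i, (U * Uᴴ) i i = 1) (z : Fin n → ℂ) :
    ∑ α, ∑ k, tangentProj U (vecMulVec z (Pi.single α (basisOneI k))) *
        (tangentProj U (vecMulVec z (Pi.single α (basisOneI k))))ᴴ =
      (2 * (p : ℝ) - 2) • vecMulVec z (star z) +
        hadamard (reMat ((diagonal z)ᴴ * (U * Uᴴ) * diagonal z)) (U * Uᴴ) := by
  ext i j
  have hrow : ∀ i, ∑ α, U i α * star (U i α) = 1 := fun i => by
    simpa [mul_apply] using hU i
  have hgram : ∑ α, star (U i α) * U j α = star ((U * Uᴴ) i j) := by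
    simp [mul_apply, star_sum, mul_comm]
  simp only [Matrix.sum_apply, sum_basisOneI_gram_tangentProj_vecMulVec_single_apply,
    Finset.sum_add_distrib, ← Finset.mul_sum, ← Finset.sum_mul, ← Complex.ofReal_sum,
    ← Complex.re_sum, Finset.sum_sub_distrib, hrow, hgram]
  have hre : (z i * star (z j) * star ((U * Uᴴ) i j)).re =
      (star (z i) * (U * Uᴴ) i j * z j).re := by
    rw [← Complex.conj_re, ← Complex.star_def]
    congr 1
    simp only [star_mul', star_star]
    ring
  have hdiag : ((diagonal z)ᴴ * (U * Uᴴ) * diagonal z) i j =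
      star (z i) * (U * Uᴴ) i j * z j := by
    rw [diagonal_conjTranspose, mul_diagonal, diagonal_mul, Pi.star_apply]
  simp only [hre, hdiag, Finset.sum_const, Finset.card_univ, Fintype.card_fin, nsmul_eq_mul,
    Matrix.add_apply, Matrix.smul_apply, hadamard_apply, reMat, of_apply, vecMulVec_apply,
    Pi.star_apply, Complex.real_smul]
  push_cast
  ring

lemma cmip_sum {ι : Type*} (S : Matrix (Fin n) (Fin n) ℂ) (s : Finset ι)
    (Q : ι → Matrix (Fin n) (Fin n) ℂ) :
    cmip S (∑ x ∈ s, Q x) = ∑ x ∈ s, cmip S (Q x) := by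
  simp only [cmip, conjTranspose_sum, Finset.sum_mul, trace_sum, Complex.re_sum]

theorem stmt9_general {n p : ℕ}
    (U : Matrix (Fin n) (Fin p) ℂ) (hU : ∀ i, (U * Uᴴ) i i = 1)
    (S : Matrix (Fin n) (Fin n) ℂ)
    -- Riemannian Hessian PSD on the tangent space
    (h2 : ∀ Udot : Matrix (Fin n) (Fin p) ℂ,
      (∀ i, (U * Udotᴴ + Udot * Uᴴ) i i = 0) → 0 ≤ cmip S (Udot * Udotᴴ)) :
    ∀ z : Fin n → ℂ,
      0 ≤ cmip S ((2 * (p:ℝ) - 2) • Matrix.vecMulVec z (star z)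
          + Matrix.hadamard
              (reMat ((Matrix.diagonal z)ᴴ * (U * Uᴴ) * Matrix.diagonal z))
              (U * Uᴴ)) := by
  intro z
  rw [← sum_gram_tangentProj_vecMulVec_single U hU z, cmip_sum]
  refine Finset.sum_nonneg fun α _ => ?_
  rw [cmip_sum]
  exact Finset.sum_nonneg fun k _ => h2 _ (tangentProj_isTangent U _ hU)

/-- Second-order critical points `U` of `min Re tr((UU^*)^* M)` over the product
of unit spheres in `ℂ^p` satisfy the key inequality used in the PhaseCut
landscape analysis (complex case). -/
theorem stmt9 {n p : ℕ} (hn : 0 < n) (hp : 0 < p)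
    (M : Matrix (Fin n) (Fin n) ℂ) (hM : M.IsHermitian)
    (U : Matrix (Fin n) (Fin p) ℂ) (hU : ∀ i, (U * Uᴴ) i i = 1)
    (S : Matrix (Fin n) (Fin n) ℂ) (hS : S = M - reMat (ddiagC (M * (U * Uᴴ))))
    -- vanishing Riemannian gradient
    (h1 : S * U = 0)
    -- Riemannian Hessian PSD on the tangent space
    (h2 : ∀ Udot : Matrix (Fin n) (Fin p) ℂ,
      (∀ i, (U * Udotᴴ + Udot * Uᴴ) i i = 0) → 0 ≤ cmip S (Udot * Udotᴴ)) :
    ∀ z : Fin n → ℂ,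
      0 ≤ cmip S ((2 * (p:ℝ) - 2) • Matrix.vecMulVec z (star z)
          + Matrix.hadamard
              (reMat ((Matrix.diagonal z)ᴴ * (U * Uᴴ) * Matrix.diagonal z))
              (U * Uᴴ)) :=
  stmt9_general U hU S h2
end
end

section
/- Let d, p be positive integers, x_* ∈ ℝ^d, and X ∈ ℝ^{d×p}. Then there exists a unit-norm vector v ∈ ℝ^p such that ‖X Xᵀ − x_* x_*ᵀ‖_F ≥ (1/(2√2)) · ‖x_*‖ · ‖x_* − X v‖. In particular, v can be taken to be any unit-norm leading right singular vector of X (so that (X v)vᵀ is a best rank-1 approximation to X in Frobenius norm), normalized so that ⟨X v, x_*⟩ ≥ 0. -/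
open Matrix Filter Finset
open scoped Classical

noncomputable section

/-- `β(X)ᵢ = ⟨Aᵢ, X Xᵀ⟩`. -/
def betaV {n d p : ℕ} (A : Fin n → Matrix (Fin d) (Fin d) ℝ)
    (X : Matrix (Fin d) (Fin p) ℝ) : Fin n → ℝ :=
  fun i => mip (A i) (X * Xᵀ)

/-- `α(X)ᵢ = ⟨Aᵢ, X Xᵀ⟩^{1/2}`. -/
def alphaV {n d p : ℕ} (A : Fin n → Matrix (Fin d) (Fin d) ℝ)
    (X : Matrix (Fin d) (Fin p) ℝ) : Fin n → ℝ :=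
  fun i => Real.sqrt (mip (A i) (X * Xᵀ))

/-- `X₀` is a second-order critical point of `f` : the limsup of
`(f X − f X₀)/‖X − X₀‖²` as `X → X₀` (X ≠ X₀) is nonnegative, i.e. there is no
direction from `X₀` along which `f` decreases at least quadratically. -/
def IsSOCP {d p : ℕ} (f : Matrix (Fin d) (Fin p) ℝ → ℝ)
    (X₀ : Matrix (Fin d) (Fin p) ℝ) : Prop :=
  ∀ c > (0:ℝ), ∀ δ > (0:ℝ), ∃ X, X ≠ X₀ ∧ frobSq (X - X₀) < δ ∧
    -c * frobSq (X - X₀) < f X - f X₀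

namespace Helper

variable {n d p : ℕ}

lemma vnormSq_nonneg (v : Fin n → ℝ) : 0 ≤ vnormSq v :=
  Finset.sum_nonneg fun _ _ => sq_nonneg _

lemma frobSq_nonneg (E : Matrix (Fin d) (Fin p) ℝ) : 0 ≤ frobSq E :=
  Finset.sum_nonneg fun _ _ => Finset.sum_nonneg fun _ _ => sq_nonneg _

lemma vnorm_nonneg (v : Fin n → ℝ) : 0 ≤ vnorm v := Real.sqrt_nonneg _

lemma vnorm_sq (v : Fin n → ℝ) : (vnorm v)^2 = vnormSq v :=
  Real.sq_sqrt (vnormSq_nonneg v)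

lemma vnormSq_eq_zero {v : Fin n → ℝ} (h : vnormSq v = 0) : v = 0 := by
  funext i
  have := (Finset.sum_eq_zero_iff_of_nonneg (fun i _ => sq_nonneg (v i))).1 h i (Finset.mem_univ i)
  simpa using pow_eq_zero_iff (n := 2) (by norm_num) |>.1 this

lemma vip_self (v : Fin n → ℝ) : vip v v = vnormSq v := by
  simp [vip, vnormSq, sq]

lemma vip_comm (u v : Fin n → ℝ) : vip u v = vip v u := by
  simp [vip, mul_comm]

lemma vip_cs (u v : Fin n → ℝ) : (vip u v)^2 ≤ vnormSq u * vnormSq v :=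
  Finset.sum_mul_sq_le_sq_mul_sq _ _ _

lemma vip_add_left (u w y : Fin n → ℝ) : vip (u + w) y = vip u y + vip w y := by
  simp [vip, ← Finset.sum_add_distrib]; exact Finset.sum_congr rfl fun i _ => by
    simp [add_mul]

lemma vip_sub_left (u w y : Fin n → ℝ) : vip (u - w) y = vip u y - vip w y := by
  simp [vip, ← Finset.sum_sub_distrib]; exact Finset.sum_congr rfl fun i _ => by
    simp [sub_mul]

lemma vip_smul_left (c : ℝ) (u y : Fin n → ℝ) : vip (c • u) y = c * vip u y := by
  simp [vip, Finset.mul_sum]; exact Finset.sum_congr rfl fun i _ => by ring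

lemma vip_add_right (u w y : Fin n → ℝ) : vip y (u + w) = vip y u + vip y w := by
  rw [vip_comm, vip_add_left, vip_comm u y, vip_comm w y]

lemma vip_sub_right (u w y : Fin n → ℝ) : vip y (u - w) = vip y u - vip y w := by
  rw [vip_comm, vip_sub_left, vip_comm u y, vip_comm w y]

lemma vip_smul_right (c : ℝ) (u y : Fin n → ℝ) : vip y (c • u) = c * vip y u := by
  rw [vip_comm, vip_smul_left, vip_comm]

lemma vnormSq_smul (c : ℝ) (v : Fin n → ℝ) : vnormSq (c • v) = c^2 * vnormSq v := by
  simp [vnormSq, Finset.mul_sum]; exact Finset.sum_congr rfl fun i _ => by ring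

lemma vnormSq_add (u w : Fin n → ℝ) :
    vnormSq (u + w) = vnormSq u + 2 * vip u w + vnormSq w := by
  rw [← vip_self, vip_add_left, vip_add_right, vip_add_right, vip_self, vip_self,
    vip_comm w u]; ring

lemma vip_mulVec (X : Matrix (Fin d) (Fin p) ℝ) (w : Fin p → ℝ) (y : Fin d → ℝ) :
    vip (X.mulVec w) y = vip w (Xᵀ.mulVec y) := by
  simp only [vip, Matrix.mulVec, dotProduct, Matrix.transpose_apply,
    Finset.sum_mul, Finset.mul_sum]
  rw [Finset.sum_comm]
  exact Finset.sum_congr rfl fun i _ => Finset.sum_congr rfl fun j _ => by ring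

lemma bessel2 {y z b : Fin n → ℝ} (hy : vnormSq y = 1) (hz : vnormSq z = 1)
    (hyz : vip y z = 0) : (vip b y)^2 + (vip b z)^2 ≤ vnormSq b := by
  have h0 : 0 ≤ vnormSq (b - vip b y • y - vip b z • z) := vnormSq_nonneg _
  have hexp : vnormSq (b - vip b y • y - vip b z • z)
      = vnormSq b - (vip b y)^2 - (vip b z)^2 := by
    have e1 : b - vip b y • y - vip b z • z = b + ((- vip b y) • y + (- vip b z) • z) := by
      funext i; simp; ring
    rw [e1, vnormSq_add, vnormSq_add, vip_add_right, vip_smul_right, vip_smul_right,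
      vip_smul_left, vip_smul_right, vnormSq_smul, vnormSq_smul, hy, hz, hyz]
    ring
  linarith [h0, hexp.symm ▸ h0]

lemma bessel1 {y : Fin n → ℝ} (b : Fin n → ℝ) (hy : vnormSq y = 1) :
    (vip b y)^2 ≤ vnormSq b := by
  have := vip_cs b y
  rw [hy] at this; linarith

lemma mulVec_apply (E : Matrix (Fin d) (Fin p) ℝ) (y : Fin p → ℝ) (i : Fin d) :
    (E.mulVec y) i = vip (fun j => E i j) y := by
  simp [Matrix.mulVec, dotProduct, vip]

lemma rows_le_frob (E : Matrix (Fin d) (Fin d) ℝ) {y z : Fin d → ℝ}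
    (hy : vnormSq y = 1) (hz : vnormSq z = 1) (hyz : vip y z = 0) :
    vnormSq (E.mulVec y) + vnormSq (E.mulVec z) ≤ frobSq E := by
  have h : ∀ i : Fin d, ((E.mulVec y) i)^2 + ((E.mulVec z) i)^2 ≤ ∑ j, (E i j)^2 := by
    intro i
    have := bessel2 (b := fun j => E i j) hy hz hyz
    rw [mulVec_apply, mulVec_apply]
    simpa [vnormSq] using this
  calc vnormSq (E.mulVec y) + vnormSq (E.mulVec z)
      = ∑ i, (((E.mulVec y) i)^2 + ((E.mulVec z) i)^2) := by
        rw [vnormSq, vnormSq, Finset.sum_add_distrib]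
    _ ≤ ∑ i, ∑ j, (E i j)^2 := Finset.sum_le_sum fun i _ => h i
    _ = frobSq E := rfl

lemma row_le_frob (E : Matrix (Fin d) (Fin d) ℝ) {y : Fin d → ℝ}
    (hy : vnormSq y = 1) : vnormSq (E.mulVec y) ≤ frobSq E := by
  have h : ∀ i : Fin d, ((E.mulVec y) i)^2 ≤ ∑ j, (E i j)^2 := by
    intro i
    have := bessel1 (b := fun j => E i j) hy
    rw [mulVec_apply]
    simpa [vnormSq] using this
  calc vnormSq (E.mulVec y) = ∑ i, ((E.mulVec y) i)^2 := rfl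
    _ ≤ ∑ i, ∑ j, (E i j)^2 := Finset.sum_le_sum fun i _ => h i
    _ = frobSq E := rfl

lemma frob_ge_one (E : Matrix (Fin d) (Fin d) ℝ) {y : Fin d → ℝ}
    (hy : vnormSq y = 1) : (vip (E.mulVec y) y)^2 ≤ frobSq E :=
  le_trans (bessel1 _ hy) (row_le_frob E hy)

lemma frob_ge_two (E : Matrix (Fin d) (Fin d) ℝ) (hE : Eᵀ = E) {y z : Fin d → ℝ}
    (hy : vnormSq y = 1) (hz : vnormSq z = 1) (hyz : vip y z = 0) :
    (vip (E.mulVec y) y)^2 + 2 * (vip (E.mulVec y) z)^2 ≤ frobSq E := by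
  have h1 := bessel2 (b := E.mulVec y) hy hz hyz
  have h2 := bessel1 (b := E.mulVec z) hy
  have hsym : vip (E.mulVec y) z = vip (E.mulVec z) y := by
    rw [vip_mulVec, hE, vip_comm]
  have h3 := rows_le_frob E hy hz hyz
  rw [hsym]; rw [hsym] at h1; linarith

lemma mulVec_add' (A : Matrix (Fin d) (Fin p) ℝ) (u w : Fin p → ℝ) :
    A.mulVec (u + w) = A.mulVec u + A.mulVec w := Matrix.mulVec_add A u w

lemma mulVec_smul' (A : Matrix (Fin d) (Fin p) ℝ) (c : ℝ) (u : Fin p → ℝ) :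
    A.mulVec (c • u) = c • A.mulVec u := by
  funext i
  simp [Matrix.mulVec, dotProduct, Finset.mul_sum]
  exact Finset.sum_congr rfl fun j _ => by ring

lemma quad_self (X : Matrix (Fin d) (Fin p) ℝ) (w : Fin p → ℝ) :
    vip ((Xᵀ * X).mulVec w) w = vnormSq (X.mulVec w) := by
  rw [← Matrix.mulVec_mulVec, vip_comm, ← vip_mulVec, vip_self]

lemma quad_symm (X : Matrix (Fin d) (Fin p) ℝ) (w y : Fin p → ℝ) :
    vip ((Xᵀ * X).mulVec w) y = vip ((Xᵀ * X).mulVec y) w := by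
  rw [vip_mulVec, Matrix.transpose_mul, Matrix.transpose_transpose, vip_comm]

lemma quad_zero {R q : ℝ} (hq : 0 ≤ q)
    (h : ∀ t : ℝ, 0 ≤ 2 * t * R + t^2 * q) : R ≤ 0 := by
  by_contra hne
  push_neg at hne
  have hq1 : (0:ℝ) < q + 1 := by linarith
  have h1 := h (-R / (q + 1))
  have h2 : 0 ≤ (2 * (-R / (q + 1)) * R + (-R / (q + 1))^2 * q) * (q+1)^2 :=
    mul_nonneg h1 (sq_nonneg _)
  have h3 : (2 * (-R / (q + 1)) * R + (-R / (q + 1))^2 * q) * (q+1)^2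
      = -(R^2 * (q + 2)) := by
    field_simp
    ring
  rw [h3] at h2
  nlinarith [mul_pos hne hne]

lemma eigen (X : Matrix (Fin d) (Fin p) ℝ) (v : Fin p → ℝ) (hv : vnormSq v = 1)
    (hmax : ∀ w, vnormSq (X.mulVec w) ≤ vnormSq (X.mulVec v) * vnormSq w) :
    (Xᵀ * X).mulVec v = vnormSq (X.mulVec v) • v := by
  set s2 := vnormSq (X.mulVec v) with hs2
  set A := Xᵀ * X with hA
  set r : Fin p → ℝ := s2 • v - A.mulVec v with hr
  have hQ : ∀ w, 0 ≤ s2 * vnormSq w - vip (A.mulVec w) w := by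
    intro w; rw [hA, quad_self]; linarith [hmax w]
  have hAv : vip (A.mulVec v) v = s2 := by rw [hA, quad_self, hs2]
  have hrr : vip r r = s2 * vip v r - vip (A.mulVec v) r := by
    rw [hr]
    conv_lhs => rw [vip_sub_left, vip_smul_left]
  have hkey : ∀ t : ℝ, 0 ≤ 2 * t * vip r r + t^2 * (s2 * vnormSq r - vip (A.mulVec r) r) := by
    intro t
    have h0 := hQ (v + t • r)
    have e1 : vnormSq (v + t • r) = 1 + 2 * t * vip v r + t^2 * vnormSq r := by
      rw [vnormSq_add, vnormSq_smul, vip_smul_right, hv]; ring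
    have e2 : vip (A.mulVec (v + t • r)) (v + t • r)
        = s2 + 2 * t * vip (A.mulVec v) r + t^2 * vip (A.mulVec r) r := by
      rw [mulVec_add', mulVec_smul', vip_add_left, vip_add_right, vip_add_right,
        vip_smul_left, vip_smul_left, vip_smul_right, vip_smul_right, hAv,
        hA, quad_symm X r v, ← hA]
      ring
    have e3 : 2 * t * vip r r + t^2 * (s2 * vnormSq r - vip (A.mulVec r) r)
        = s2 * (1 + 2 * t * vip v r + t^2 * vnormSq r)
          - (s2 + 2 * t * vip (A.mulVec v) r + t^2 * vip (A.mulVec r) r) := by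
      rw [hrr]; ring
    rw [e1, e2] at h0
    rw [e3]; exact h0
  have hr0 : vip r r = 0 := by
    have h1 : vip r r ≤ 0 := quad_zero (hQ r) hkey
    have h2 : 0 ≤ vip r r := by rw [vip_self]; exact vnormSq_nonneg r
    linarith
  have : r = 0 := by
    rw [vip_self] at hr0; exact vnormSq_eq_zero hr0
  have := sub_eq_zero.mp (hr ▸ this)
  exact this.symm ▸ rfl
lemma arith {c t s mp F : ℝ} (hc : 0 ≤ c) (ht : 0 ≤ t) (hs : 0 ≤ s)
    (hmp0 : 0 ≤ mp) (hmps : mp ≤ s^2)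
    (h1 : (s^2 - c^2)^2 + 2*(c^2*t) ≤ F)
    (h2 : (mp - (c^2+t))^2 ≤ F) :
    (c^2+t) * ((c-s)^2 + t) ≤ 8*F := by
  rcases le_or_gt (c^2+t) (2*s^2) with h|h
  · have hu : 0 ≤ 2*s^2 - c^2 - t := by linarith
    have hcs : c^2 ≤ 2*s^2 := by linarith
    have e0 : 0 ≤ 8*(s^2 - c^2)^2 - c^2*(c - s)^2 := by
      nlinarith [sq_nonneg (c-s), sq_nonneg (c+s), mul_nonneg hc hs,
        mul_nonneg (mul_nonneg hc hs) (sq_nonneg (c-s))]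
    have e1 : 0 ≤ 2*s^4 + 16*c^2*s^2 - 8*c^4 + 4*c*s^3 := by
      nlinarith [mul_nonneg (mul_nonneg hc hs) (mul_nonneg hs hs), sq_nonneg c, sq_nonneg s,
        mul_nonneg (sub_nonneg.2 hcs) (sq_nonneg c)]
    rcases eq_or_lt_of_le (show c^2 ≤ 2*s^2 by linarith) with he|hlt
    · have ht0 : t = 0 := by nlinarith
      subst ht0
      nlinarith [e0, h1]
    · nlinarith [mul_nonneg hu e0, mul_nonneg ht e1,
        mul_nonneg (mul_nonneg ht hu) (show (0:ℝ) ≤ 2*s^2 - c^2 by linarith), hlt, h1]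
  · have k1 : c^2 + t - mp ≥ (c^2+t)/2 := by nlinarith
    have k2 : F ≥ (c^2+t)^2/4 := by nlinarith
    nlinarith [k2, sq_nonneg (c-s), sq_nonneg (c+s), mul_nonneg hc hs,
      mul_nonneg (mul_nonneg hc hs) ht, sq_nonneg c, h]

lemma vecMulVec_mulVec (x : Fin d → ℝ) (y : Fin d → ℝ) :
    (Matrix.vecMulVec x x).mulVec y = (vip x y) • x := by
  funext i
  simp only [Matrix.mulVec, dotProduct, Matrix.vecMulVec_apply, vip, Pi.smul_apply,
    smul_eq_mul, Finset.sum_mul]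
  exact Finset.sum_congr rfl fun j _ => by ring

lemma EmulVec (X : Matrix (Fin d) (Fin p) ℝ) (x : Fin d → ℝ) (y : Fin d → ℝ) :
    (X * Xᵀ - Matrix.vecMulVec x x).mulVec y
      = X.mulVec (Xᵀ.mulVec y) - (vip x y) • x := by
  rw [Matrix.sub_mulVec, Matrix.mulVec_mulVec, vecMulVec_mulVec]

lemma Esymm (X : Matrix (Fin d) (Fin p) ℝ) (x : Fin d → ℝ) :
    (X * Xᵀ - Matrix.vecMulVec x x)ᵀ = X * Xᵀ - Matrix.vecMulVec x x := by
  rw [Matrix.transpose_sub, Matrix.transpose_mul, Matrix.transpose_transpose]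
  congr 1
  funext i j
  simp [Matrix.vecMulVec_apply, mul_comm]

set_option maxHeartbeats 1000000 in
lemma key (xstar : Fin d → ℝ) (X : Matrix (Fin d) (Fin p) ℝ) (v : Fin p → ℝ)
    (hv : vnormSq v = 1)
    (hmax : ∀ w, vnormSq (X.mulVec w) ≤ vnormSq (X.mulVec v) * vnormSq w)
    (hpos : 0 ≤ vip (X.mulVec v) xstar) :
    vnormSq xstar * vnormSq (xstar - X.mulVec v)
      ≤ 8 * frobSq (X * Xᵀ - Matrix.vecMulVec xstar xstar) := by
  obtain ⟨E, hE⟩ : ∃ E, E = X * Xᵀ - Matrix.vecMulVec xstar xstar := ⟨_, rfl⟩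
  rw [← hE]
  have hF0 : 0 ≤ frobSq E := hE ▸ frobSq_nonneg _
  rcases eq_or_lt_of_le (vnormSq_nonneg xstar) with ha0|ha0
  · rw [← ha0, zero_mul]; positivity
  have quadE : ∀ y : Fin d → ℝ, vip (E.mulVec y) y = vnormSq (Xᵀ.mulVec y) - (vip xstar y)^2 := by
    intro y
    rw [hE, EmulVec, vip_sub_left, vip_smul_left, vip_mulVec, vip_self, sq]
  obtain ⟨u, hud⟩ : ∃ u, u = X.mulVec v := ⟨_, rfl⟩
  rw [← hud]
  obtain ⟨s2, hs2d⟩ : ∃ s2, s2 = vnormSq u := ⟨_, rfl⟩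
  have hmax' : ∀ w, vnormSq (X.mulVec w) ≤ s2 * vnormSq w := by
    intro w; rw [hs2d, hud]; exact hmax w
  have hs20 : 0 ≤ s2 := hs2d ▸ vnormSq_nonneg _
  obtain ⟨m, hmd⟩ : ∃ m, m = vnormSq (Xᵀ.mulVec xstar) := ⟨_, rfl⟩
  have hm0 : 0 ≤ m := hmd ▸ vnormSq_nonneg _
  have hmle : m ≤ s2 * vnormSq xstar := by
    have h1 : m = vip (X.mulVec (Xᵀ.mulVec xstar)) xstar := by
      rw [vip_mulVec, vip_self, hmd]
    have h2 := vip_cs (X.mulVec (Xᵀ.mulVec xstar)) xstar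
    have h3 := hmax' (Xᵀ.mulVec xstar)
    rw [← hmd] at h3
    have hmm : m^2 ≤ s2 * vnormSq xstar * m := by
      calc m^2 = (vip (X.mulVec (Xᵀ.mulVec xstar)) xstar)^2 := by rw [← h1]
        _ ≤ vnormSq (X.mulVec (Xᵀ.mulVec xstar)) * vnormSq xstar := h2
        _ ≤ (s2 * m) * vnormSq xstar :=
            mul_le_mul_of_nonneg_right h3 (le_of_lt ha0)
        _ = s2 * vnormSq xstar * m := by ring
    rcases eq_or_lt_of_le hm0 with h|h
    · rw [← h]; exact mul_nonneg hs20 (le_of_lt ha0)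
    · nlinarith [hmm, h]
  -- bound B via unit vector along xstar
  obtain ⟨a, had⟩ : ∃ a, a = Real.sqrt (vnormSq xstar) := ⟨_, rfl⟩
  have ha : a^2 = vnormSq xstar := had ▸ Real.sq_sqrt (le_of_lt ha0)
  have hap : 0 < a := had ▸ Real.sqrt_pos.2 ha0
  obtain ⟨y0, hy0d⟩ : ∃ y0 : Fin d → ℝ, y0 = a⁻¹ • xstar := ⟨_, rfl⟩
  have hy0 : vnormSq y0 = 1 := by
    rw [hy0d, vnormSq_smul, ← ha]; field_simp
  have hEy0 : vip (E.mulVec y0) y0 = m / vnormSq xstar - vnormSq xstar := by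
    rw [quadE, hy0d, mulVec_smul', vnormSq_smul, vip_smul_right, vip_self, ← hmd, ← ha]
    field_simp
  have hB : (m / vnormSq xstar - vnormSq xstar)^2 ≤ frobSq E := by
    have := frob_ge_one E hy0
    rwa [hEy0] at this
  rcases eq_or_lt_of_le hs20 with hs2z|hs2p
  · -- s2 = 0 : X v = 0
    have hu0 : u = 0 := vnormSq_eq_zero (by rw [← hs2d, ← hs2z])
    rw [hu0, sub_zero]
    have hm00 : m = 0 := le_antisymm (by nlinarith [hmle]) hm0
    rw [hm00, zero_div, zero_sub, neg_sq] at hB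
    nlinarith [hB, hF0]
  -- main case
  obtain ⟨s, hsd⟩ : ∃ s, s = Real.sqrt s2 := ⟨_, rfl⟩
  have hs : s^2 = s2 := hsd ▸ Real.sq_sqrt hs20
  have hsp : 0 < s := hsd ▸ Real.sqrt_pos.2 hs2p
  have heig := eigen X v hv hmax
  have h1' : Xᵀ.mulVec (X.mulVec v) = s2 • v := by
    rw [Matrix.mulVec_mulVec, heig, hs2d, hud]
  have hMu : X.mulVec (Xᵀ.mulVec u) = s2 • u := by
    rw [hud, h1', mulVec_smul']
  obtain ⟨y, hyd⟩ : ∃ y : Fin d → ℝ, y = s⁻¹ • u := ⟨_, rfl⟩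
  have hy1 : vnormSq y = 1 := by
    rw [hyd, vnormSq_smul, ← hs2d, ← hs]; field_simp
  obtain ⟨c, hcd⟩ : ∃ c, c = vip xstar y := ⟨_, rfl⟩
  have hc0 : 0 ≤ c := by
    rw [hcd, hyd, vip_smul_right, vip_comm]
    exact mul_nonneg (inv_nonneg.2 hsp.le) (hud ▸ hpos)
  obtain ⟨w, hwd⟩ : ∃ w : Fin d → ℝ, w = xstar - c • y := ⟨_, rfl⟩
  have hwy : vip w y = 0 := by
    rw [hwd, vip_sub_left, vip_smul_left, vip_self, hy1, mul_one, hcd, sub_self]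
  obtain ⟨t, htd⟩ : ∃ t, t = vnormSq w := ⟨_, rfl⟩
  have ht0 : 0 ≤ t := htd ▸ vnormSq_nonneg _
  have hyu : u = s • y := by
    rw [hyd, smul_smul, mul_inv_cancel₀ hsp.ne', one_smul]
  have hxw : xstar = c • y + w := by
    rw [hwd, add_comm, sub_add_cancel]
  have ha2 : vnormSq xstar = c^2 + t := by
    conv_lhs => rw [hxw]
    rw [vnormSq_add, vnormSq_smul, hy1, vip_smul_left, vip_comm y w, hwy, htd]
    ring
  have hxu : vnormSq (xstar - u) = (c - s)^2 + t := by
    have e : xstar - u = (c - s) • y + w := by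
      rw [hxw, hyu]; funext i
      simp only [Pi.add_apply, Pi.sub_apply, Pi.smul_apply, smul_eq_mul]
      ring
    rw [e, vnormSq_add, vnormSq_smul, hy1, vip_smul_left, vip_comm y w, hwy, htd]
    ring
  have hterm : X.mulVec (Xᵀ.mulVec y) = s2 • y := by
    rw [hyd, mulVec_smul', mulVec_smul', hMu, smul_comm]
  have hEy : E.mulVec y = (s2 - c^2) • y - c • w := by
    rw [hE, EmulVec, hterm, ← hcd]
    conv_lhs => rw [hxw]
    funext i
    simp only [Pi.sub_apply, Pi.smul_apply, Pi.add_apply, smul_eq_mul]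
    ring
  have hEyy : vip (E.mulVec y) y = s2 - c^2 := by
    rw [hEy, vip_sub_left, vip_smul_left, vip_smul_left, vip_self, hy1, hwy]
    ring
  have h1 : (s^2 - c^2)^2 + 2*(c^2*t) ≤ frobSq E := by
    rw [hs]
    rcases eq_or_lt_of_le ht0 with htz|htp
    · have hone := frob_ge_one E hy1
      rw [hEyy] at hone
      rw [← htz]
      nlinarith [hone]
    · obtain ⟨rt, hrtd⟩ : ∃ rt, rt = Real.sqrt t := ⟨_, rfl⟩
      have hrt : rt^2 = t := hrtd ▸ Real.sq_sqrt ht0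
      have hrtp : 0 < rt := hrtd ▸ Real.sqrt_pos.2 htp
      obtain ⟨z, hzd⟩ : ∃ z : Fin d → ℝ, z = rt⁻¹ • w := ⟨_, rfl⟩
      have hz1 : vnormSq z = 1 := by
        rw [hzd, vnormSq_smul, ← htd, ← hrt]; field_simp
      have hyz : vip y z = 0 := by
        rw [hzd, vip_smul_right, vip_comm y w, hwy, mul_zero]
      have hwz : vip w z = rt := by
        rw [hzd, vip_smul_right, vip_self, ← htd, ← hrt, sq]
        field_simp
      have hEyz : vip (E.mulVec y) z = -(c * rt) := by
        rw [hEy, vip_sub_left, vip_smul_left, vip_smul_left, hyz, hwz]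
        ring
      have htwo := frob_ge_two E (by rw [hE]; exact Esymm X xstar) hy1 hz1 hyz
      rw [hEyy, hEyz] at htwo
      have e : (-(c * rt))^2 = c^2 * t := by rw [← hrt]; ring
      rw [e] at htwo
      linarith [htwo]
  have hmp : m / vnormSq xstar ≤ s^2 := by
    rw [hs, div_le_iff₀ ha0]
    linarith [hmle]
  have hmp0 : 0 ≤ m / vnormSq xstar := div_nonneg hm0 (le_of_lt ha0)
  have hB' : (m / vnormSq xstar - (c^2 + t))^2 ≤ frobSq E := by
    rw [← ha2]; exact hB
  have final := arith hc0 ht0 hsp.le hmp0 hmp h1 hB'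
  rw [ha2, hxu]
  exact final

lemma key' (xstar : Fin d → ℝ) (X : Matrix (Fin d) (Fin p) ℝ) (v : Fin p → ℝ)
    (hv : vnorm v = 1)
    (hmax : ∀ u : Fin p → ℝ, vnorm u = 1 → vnorm (X.mulVec u) ≤ vnorm (X.mulVec v))
    (hpos : 0 ≤ vip (X.mulVec v) xstar) :
    (1 / (2 * Real.sqrt 2)) * vnorm xstar * vnorm (xstar - X.mulVec v) ≤
        Real.sqrt (frobSq (X * Xᵀ - Matrix.vecMulVec xstar xstar)) := by
  have hv' : vnormSq v = 1 := by rw [← vnorm_sq, hv]; norm_num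
  have hmax' : ∀ w, vnormSq (X.mulVec w) ≤ vnormSq (X.mulVec v) * vnormSq w := by
    intro w
    rcases eq_or_lt_of_le (vnormSq_nonneg w) with h|h
    · have hw0 : w = 0 := vnormSq_eq_zero h.symm
      subst hw0
      rw [Matrix.mulVec_zero]
      simp [vnormSq]
    · obtain ⟨r, hrd⟩ : ∃ r, r = Real.sqrt (vnormSq w) := ⟨_, rfl⟩
      have hr : r^2 = vnormSq w := hrd ▸ Real.sq_sqrt (vnormSq_nonneg w)
      have hrp : 0 < r := hrd ▸ Real.sqrt_pos.2 h
      have hu : vnorm (r⁻¹ • w) = 1 := by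
        rw [vnorm, vnormSq_smul, ← hr]
        rw [show (r⁻¹)^2 * r^2 = 1 by field_simp]
        exact Real.sqrt_one
      have h1 := hmax _ hu
      have h2 : vnormSq (X.mulVec (r⁻¹ • w)) ≤ vnormSq (X.mulVec v) := by
        rw [← vnorm_sq, ← vnorm_sq]
        exact pow_le_pow_left₀ (vnorm_nonneg _) h1 2
      rw [mulVec_smul', vnormSq_smul] at h2
      calc vnormSq (X.mulVec w) = r^2 * ((r⁻¹)^2 * vnormSq (X.mulVec w)) := by
            field_simp
        _ ≤ r^2 * vnormSq (X.mulVec v) := mul_le_mul_of_nonneg_left h2 (sq_nonneg r)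
        _ = vnormSq (X.mulVec v) * vnormSq w := by rw [hr]; ring
  have hq := key xstar X v hv' hmax' hpos
  have hs2 : Real.sqrt 2 > 0 := Real.sqrt_pos.2 (by norm_num)
  have hL0 : 0 ≤ (1 / (2 * Real.sqrt 2)) * vnorm xstar * vnorm (xstar - X.mulVec v) :=
    mul_nonneg (mul_nonneg (by positivity) (vnorm_nonneg _)) (vnorm_nonneg _)
  rw [Real.le_sqrt hL0 (frobSq_nonneg _)]
  have e : ((1 / (2 * Real.sqrt 2)) * vnorm xstar * vnorm (xstar - X.mulVec v))^2
      = (1/8) * (vnormSq xstar * vnormSq (xstar - X.mulVec v)) := by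
    have e2 : (Real.sqrt 2)^2 = 2 := Real.sq_sqrt (by norm_num)
    rw [mul_pow, mul_pow, vnorm_sq, vnorm_sq, div_pow, mul_pow, e2]
    ring
  rw [e]
  linarith [hq]

lemma vnorm_of_sq_one {v : Fin n → ℝ} (h : vnormSq v = 1) : vnorm v = 1 := by
  rw [vnorm, h, Real.sqrt_one]

lemma vnorm_neg (v : Fin n → ℝ) : vnorm (-v) = vnorm v := by
  unfold vnorm vnormSq
  congr 1
  exact Finset.sum_congr rfl fun i _ => by simp

lemma vip_neg_left (u y : Fin n → ℝ) : vip (-u) y = -(vip u y) := by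
  have e : -u = (-1 : ℝ) • u := by funext i; simp
  rw [e, vip_smul_left]; ring

lemma exists_max (hp : 0 < p) (X : Matrix (Fin d) (Fin p) ℝ) :
    ∃ v : Fin p → ℝ, vnorm v = 1 ∧
      ∀ u : Fin p → ℝ, vnorm u = 1 → vnorm (X.mulVec u) ≤ vnorm (X.mulVec v) := by
  have hg : Continuous (fun v : Fin p → ℝ => vnormSq v) := by
    show Continuous fun v : Fin p → ℝ => ∑ i, (v i)^2
    exact continuous_finset_sum _ fun i _ => (continuous_apply i).pow 2
  have hf : Continuous (fun v : Fin p → ℝ => vnormSq (X.mulVec v)) := by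
    show Continuous fun v : Fin p → ℝ => ∑ i, (∑ j, X i j * v j)^2
    exact continuous_finset_sum _ fun i _ =>
      (continuous_finset_sum _ fun j _ => (continuous_const.mul (continuous_apply j) : Continuous fun v : Fin p → ℝ => X i j * v j)).pow 2
  have hSclosed : IsClosed {v : Fin p → ℝ | vnormSq v = 1} :=
    isClosed_eq hg continuous_const
  have hSbdd : Bornology.IsBounded {v : Fin p → ℝ | vnormSq v = 1} := by
    apply Bornology.IsBounded.subset (Metric.isBounded_closedBall (x := (0 : Fin p → ℝ)) (r := 1))
    intro v hv
    simp only [Metric.mem_closedBall, dist_zero_right]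
    apply pi_norm_le_iff_of_nonneg (by norm_num) |>.2
    intro i
    have h1 : (v i)^2 ≤ 1 := by
      have := Finset.single_le_sum (f := fun i => (v i)^2)
        (fun i _ => sq_nonneg (v i)) (Finset.mem_univ i)
      rw [show (∑ i, (v i)^2) = vnormSq v from rfl, hv] at this
      exact this
    have h2 : |v i| ≤ 1 := by nlinarith [abs_nonneg (v i), sq_abs (v i)]
    simpa using h2
  have hScompact : IsCompact {v : Fin p → ℝ | vnormSq v = 1} :=
    Metric.isCompact_iff_isClosed_bounded.2 ⟨hSclosed, hSbdd⟩
  have hSne : {v : Fin p → ℝ | vnormSq v = 1}.Nonempty := by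
    refine ⟨fun i => if i = ⟨0, hp⟩ then 1 else 0, ?_⟩
    simp only [Set.mem_setOf_eq, vnormSq]
    rw [Finset.sum_eq_single ⟨0, hp⟩]
    · simp
    · intro b _ hb; simp [hb]
    · intro h; exact absurd (Finset.mem_univ _) h
  obtain ⟨v, hvS, hvmax⟩ := hScompact.exists_isMaxOn hSne hf.continuousOn
  refine ⟨v, vnorm_of_sq_one hvS, ?_⟩
  intro u hu
  have hu' : vnormSq u = 1 := by rw [← vnorm_sq, hu]; norm_num
  have := hvmax hu'
  exact Real.sqrt_le_sqrt this

end Helper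

/-- Frobenius-norm lower bound: `‖XXᵀ − x⋆x⋆ᵀ‖_F ≥ (1/(2√2)) ‖x⋆‖ ‖x⋆ − Xv‖`
for a suitable unit vector `v`; in particular this holds for any unit-norm
leading right singular vector of `X` normalized so that `⟨Xv, x⋆⟩ ≥ 0`. -/
theorem stmt11 {d p : ℕ} (hd : 0 < d) (hp : 0 < p)
    (xstar : Fin d → ℝ) (X : Matrix (Fin d) (Fin p) ℝ) :
    (∃ v : Fin p → ℝ, vnorm v = 1 ∧
      (1 / (2 * Real.sqrt 2)) * vnorm xstar * vnorm (xstar - X.mulVec v) ≤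
        Real.sqrt (frobSq (X * Xᵀ - Matrix.vecMulVec xstar xstar))) ∧
    (∀ v : Fin p → ℝ, vnorm v = 1 →
      (∀ u : Fin p → ℝ, vnorm u = 1 → vnorm (X.mulVec u) ≤ vnorm (X.mulVec v)) →
      0 ≤ vip (X.mulVec v) xstar →
      (1 / (2 * Real.sqrt 2)) * vnorm xstar * vnorm (xstar - X.mulVec v) ≤
        Real.sqrt (frobSq (X * Xᵀ - Matrix.vecMulVec xstar xstar))) := by
  constructor
  · obtain ⟨v, hv1, hvmax⟩ := Helper.exists_max hp X
    rcases le_or_gt 0 (vip (X.mulVec v) xstar) with h|h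
    · exact ⟨v, hv1, Helper.key' xstar X v hv1 hvmax h⟩
    · have hneg1 : vnorm (-v) = 1 := by rw [Helper.vnorm_neg]; exact hv1
      refine ⟨-v, hneg1, ?_⟩
      have hmax' : ∀ u : Fin p → ℝ, vnorm u = 1 →
          vnorm (X.mulVec u) ≤ vnorm (X.mulVec (-v)) := by
        intro u hu
        rw [Matrix.mulVec_neg, Helper.vnorm_neg]
        exact hvmax u hu
      have hpos' : 0 ≤ vip (X.mulVec (-v)) xstar := by
        rw [Matrix.mulVec_neg]
        have e : -(X.mulVec v) = -(1:ℝ) • (X.mulVec v) := by funext i; simp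
        rw [show vip (-(X.mulVec v)) xstar = -(vip (X.mulVec v) xstar) by
          rw [e, Helper.vip_smul_left]; ring]
        linarith
      exact Helper.key' xstar X (-v) hneg1 hmax' hpos'
  · intro v hv hmax hpos
    exact Helper.key' xstar X v hv hmax hpos
end
end

section
/- Let n, d, p be positive integers, F ∈ ℝ^{n×d}, y ∈ ℝⁿ, and λ > 0. Define R_λ := (nλ I_d + Fᵀ F)^{-1} Fᵀ diag(y) and M_λ := λ · diag(y)(nλ I_n + F Fᵀ)^{-1} diag(y). Then for every U ∈ ℝ^{n×p} with unit-norm rows (diag(U Uᵀ) = 𝟏), the matrix X := R_λ U satisfies (1/n)‖F X‖² + λ‖X‖² ≤ (1/n)‖y‖². -/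
/-!
Write `A = nλ I + FᵀF` and `B = diag(y) U`, so that `X = A⁻¹ Fᵀ B` solves the normal equations
`A X = Fᵀ B`. Then `s := ‖F X‖² + nλ‖X‖² = tr(Xᵀ A X) = ⟨F X, B⟩`, and Cauchy–Schwarz gives
`s² ≤ ‖F X‖² ‖B‖² ≤ s ‖B‖²`, hence `s ≤ ‖B‖²`. Unit rows of `U` make `‖B‖² = ‖y‖²`.
-/

open Matrix Filter Finset
open scoped Classical

noncomputable section

section Frobenius

variable {m l : ℕ}

lemma frobSq_nonneg_s13 (X : Matrix (Fin m) (Fin l) ℝ) : 0 ≤ frobSq X :=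
  Finset.sum_nonneg fun _ _ => Finset.sum_nonneg fun _ _ => sq_nonneg _

lemma trace_transpose_mul_eq_sum (X Y : Matrix (Fin m) (Fin l) ℝ) :
    (Xᵀ * Y).trace = ∑ i, ∑ j, X i j * Y i j := by
  simp only [trace, Matrix.diag, mul_apply, transpose_apply]
  exact Finset.sum_comm

lemma frobSq_eq_trace (X : Matrix (Fin m) (Fin l) ℝ) : frobSq X = (Xᵀ * X).trace := by
  simp only [trace_transpose_mul_eq_sum, frobSq, sq]

lemma trace_transpose_mul_sq_le (X Y : Matrix (Fin m) (Fin l) ℝ) :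
    (Xᵀ * Y).trace ^ 2 ≤ frobSq X * frobSq Y := by
  simp only [trace_transpose_mul_eq_sum, frobSq, ← Fintype.sum_prod_type']
  exact Finset.sum_mul_sq_le_sq_mul_sq _ _ _

lemma frobSq_diagonal_mul_of_rows_unit (y : Fin m → ℝ) (U : Matrix (Fin m) (Fin l) ℝ)
    (hU : ∀ i, ∑ j, U i j ^ 2 = 1) : frobSq (diagonal y * U) = vnormSq y := by
  refine Finset.sum_congr rfl fun i _ => ?_
  simp only [diagonal_mul, mul_pow, ← Finset.mul_sum, hU i, mul_one]

end Frobenius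

lemma le_of_sq_le_mul_of_le {s t b : ℝ} (hts : t ≤ s) (hb : 0 ≤ b)
    (h : s ^ 2 ≤ t * b) : s ≤ b := by
  nlinarith

lemma posDef_smul_one_add_transpose_mul {m k : Type*} [Fintype m] [Fintype k] [DecidableEq k]
    {c : ℝ} (hc : 0 < c) (F : Matrix m k ℝ) : (c • (1 : Matrix k k ℝ) + Fᵀ * F).PosDef := by
  have hF : (Fᵀ * F).PosSemidef := by
    simpa only [conjTranspose_eq_transpose_of_trivial] using posSemidef_conjTranspose_mul_self F
  exact (PosDef.one.smul hc).add_posSemidef hF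

theorem frobSq_mul_add_smul_frobSq_le {n d p : ℕ} {c : ℝ} (hc : 0 ≤ c)
    (F : Matrix (Fin n) (Fin d) ℝ) (B : Matrix (Fin n) (Fin p) ℝ) (X : Matrix (Fin d) (Fin p) ℝ)
    (hX : (c • 1 + Fᵀ * F) * X = Fᵀ * B) :
    frobSq (F * X) + c * frobSq X ≤ frobSq B := by
  have hs : frobSq (F * X) + c * frobSq X = ((F * X)ᵀ * B).trace := by
    rw [transpose_mul, Matrix.mul_assoc, ← hX, Matrix.add_mul, Matrix.smul_mul, Matrix.one_mul,
      Matrix.mul_add, Matrix.mul_smul, trace_add, trace_smul, smul_eq_mul, frobSq_eq_trace,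
      frobSq_eq_trace, transpose_mul, Matrix.mul_assoc, Matrix.mul_assoc, add_comm]
  refine le_of_sq_le_mul_of_le (t := frobSq (F * X)) ?_ (frobSq_nonneg_s13 B) ?_
  · exact le_add_of_nonneg_right (mul_nonneg hc (frobSq_nonneg_s13 X))
  · rw [hs]
    exact trace_transpose_mul_sq_le _ _

theorem stmt13_general {n d p : ℕ} (hn : 0 < n)
    (F : Matrix (Fin n) (Fin d) ℝ) (y : Fin n → ℝ) (lam : ℝ) (hlam : 0 < lam)
    (Rlam : Matrix (Fin d) (Fin n) ℝ)
    (hRlam : Rlam = (((n:ℝ) * lam) • (1 : Matrix (Fin d) (Fin d) ℝ) + Fᵀ * F)⁻¹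
        * Fᵀ * Matrix.diagonal y)
    (U : Matrix (Fin n) (Fin p) ℝ) (hU : ∀ i, ∑ j, (U i j) ^ 2 = 1)
    (X : Matrix (Fin d) (Fin p) ℝ) (hX : X = Rlam * U) :
    (1 / (n:ℝ)) * frobSq (F * X) + lam * frobSq X ≤ (1 / (n:ℝ)) * vnormSq y := by
  have hc : (0:ℝ) < n * lam := by positivity
  have hA := (posDef_smul_one_add_transpose_mul hc F).det_pos.ne'.isUnit
  have hnormal : (((n:ℝ) * lam) • 1 + Fᵀ * F) * X = Fᵀ * (diagonal y * U) := by
    rw [hX, hRlam, ← Matrix.mul_assoc, ← Matrix.mul_assoc, ← Matrix.mul_assoc,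
      mul_nonsing_inv _ hA, Matrix.one_mul, Matrix.mul_assoc]
  have hbound := frobSq_mul_add_smul_frobSq_le hc.le F _ X hnormal
  rw [frobSq_diagonal_mul_of_rows_unit y U hU] at hbound
  calc (1 / (n:ℝ)) * frobSq (F * X) + lam * frobSq X
      = (1 / (n:ℝ)) * (frobSq (F * X) + n * lam * frobSq X) := by field_simp
    _ ≤ (1 / (n:ℝ)) * vnormSq y := by gcongr

/-- For any feasible `U` of the PhaseCut problem, `X = R_λ U` satisfies
`(1/n)‖F X‖² + λ‖X‖² ≤ (1/n)‖y‖²`. -/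
theorem stmt13 {n d p : ℕ} (hn : 0 < n) (hd : 0 < d) (hp : 0 < p)
    (F : Matrix (Fin n) (Fin d) ℝ) (y : Fin n → ℝ) (lam : ℝ) (hlam : 0 < lam)
    (Rlam : Matrix (Fin d) (Fin n) ℝ)
    (hRlam : Rlam = (((n:ℝ) * lam) • (1 : Matrix (Fin d) (Fin d) ℝ) + Fᵀ * F)⁻¹
        * Fᵀ * Matrix.diagonal y)
    (Mlam : Matrix (Fin n) (Fin n) ℝ)
    (hMlam : Mlam = lam • (Matrix.diagonal y
        * (((n:ℝ) * lam) • (1 : Matrix (Fin n) (Fin n) ℝ) + F * Fᵀ)⁻¹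
        * Matrix.diagonal y))
    (U : Matrix (Fin n) (Fin p) ℝ) (hU : ∀ i, ∑ j, (U i j) ^ 2 = 1)
    (X : Matrix (Fin d) (Fin p) ℝ) (hX : X = Rlam * U) :
    (1 / (n:ℝ)) * frobSq (F * X) + lam * frobSq X ≤ (1 / (n:ℝ)) * vnormSq y :=
  stmt13_general hn F y lam hlam Rlam hRlam U hU X hX
end
end

section
/- Let n, d, r be positive integers, F ∈ ℝ^{n×d}, λ > 0, X_* ∈ ℝ^{d×r}, and ε ∈ ℝⁿ, and set y := |F X_*| + ε. Let U_* ∈ ℝ^{n×r} have unit-norm rows with F X_* = diag(|F X_*|) U_*, and let M_λ := λ · diag(y)(nλ I_n + F Fᵀ)^{-1} diag(y). Then ⟨M_λ, U_* U_*ᵀ⟩ ≤ ‖ε‖²/n + λ‖X_*‖². -/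
open Matrix Filter Finset
open scoped Classical

noncomputable section

/-- Auxiliary: Frobenius pairing of (possibly rectangular) matrices. -/
def tpr {a b : ℕ} (P Q : Matrix (Fin a) (Fin b) ℝ) : ℝ := (Pᵀ * Q).trace

lemma tpr_comm {a b : ℕ} (P Q : Matrix (Fin a) (Fin b) ℝ) : tpr P Q = tpr Q P := by
  unfold tpr
  rw [← Matrix.trace_transpose, Matrix.transpose_mul, Matrix.transpose_transpose]

lemma tpr_add_left {a b : ℕ} (P Q R : Matrix (Fin a) (Fin b) ℝ) :
    tpr (P + Q) R = tpr P R + tpr Q R := by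
  unfold tpr
  rw [Matrix.transpose_add, Matrix.add_mul, Matrix.trace_add]

lemma tpr_add_right {a b : ℕ} (P Q R : Matrix (Fin a) (Fin b) ℝ) :
    tpr P (Q + R) = tpr P Q + tpr P R := by
  rw [tpr_comm, tpr_add_left, tpr_comm Q P, tpr_comm R P]

lemma tpr_sub_left {a b : ℕ} (P Q R : Matrix (Fin a) (Fin b) ℝ) :
    tpr (P - Q) R = tpr P R - tpr Q R := by
  unfold tpr
  rw [Matrix.transpose_sub, Matrix.sub_mul, Matrix.trace_sub]

lemma tpr_sub_right {a b : ℕ} (P Q R : Matrix (Fin a) (Fin b) ℝ) :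
    tpr P (Q - R) = tpr P Q - tpr P R := by
  rw [tpr_comm, tpr_sub_left, tpr_comm Q P, tpr_comm R P]

lemma tpr_smul_left {a b : ℕ} (c : ℝ) (P Q : Matrix (Fin a) (Fin b) ℝ) :
    tpr (c • P) Q = c * tpr P Q := by
  unfold tpr
  rw [Matrix.transpose_smul, Matrix.smul_mul, Matrix.trace_smul, smul_eq_mul]

lemma tpr_smul_right {a b : ℕ} (c : ℝ) (P Q : Matrix (Fin a) (Fin b) ℝ) :
    tpr P (c • Q) = c * tpr P Q := by
  rw [tpr_comm, tpr_smul_left, tpr_comm Q P]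

lemma tpr_mul_left {a b e : ℕ} (F : Matrix (Fin a) (Fin b) ℝ)
    (M : Matrix (Fin b) (Fin e) ℝ) (N : Matrix (Fin a) (Fin e) ℝ) :
    tpr (F * M) N = tpr M (Fᵀ * N) := by
  unfold tpr
  rw [Matrix.transpose_mul, Matrix.mul_assoc]

lemma tpr_eq_sum {a b : ℕ} (B : Matrix (Fin a) (Fin b) ℝ) :
    tpr B B = ∑ j, ∑ i, (B i j) ^ 2 := by
  unfold tpr Matrix.trace
  simp [Matrix.diag, Matrix.mul_apply, sq]

lemma tpr_self_nonneg {a b : ℕ} (B : Matrix (Fin a) (Fin b) ℝ) : 0 ≤ tpr B B := by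
  rw [tpr_eq_sum]
  exact Finset.sum_nonneg fun j _ => Finset.sum_nonneg fun i _ => sq_nonneg _

/-- Objective value of the ground-truth phases: `⟨M_λ, U⋆U⋆ᵀ⟩ ≤ ‖ε‖²/n + λ‖X⋆‖²`. -/
theorem stmt15 {n d r : ℕ} (hn : 0 < n) (hd : 0 < d) (hr : 0 < r)
    (F : Matrix (Fin n) (Fin d) ℝ) (lam : ℝ) (hlam : 0 < lam)
    (Xstar : Matrix (Fin d) (Fin r) ℝ) (ε : Fin n → ℝ)
    (y : Fin n → ℝ) (hy_def : ∀ i, y i = rowNorms (F * Xstar) i + ε i)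
    (Ustar : Matrix (Fin n) (Fin r) ℝ)
    (hUstar : ∀ i, ∑ j, (Ustar i j) ^ 2 = 1)
    (hUstar_def : F * Xstar = Matrix.diagonal (rowNorms (F * Xstar)) * Ustar)
    (Mlam : Matrix (Fin n) (Fin n) ℝ)
    (hMlam : Mlam = lam • (Matrix.diagonal y
        * (((n:ℝ) * lam) • (1 : Matrix (Fin n) (Fin n) ℝ) + F * Fᵀ)⁻¹
        * Matrix.diagonal y)) :
    mip Mlam (Ustar * Ustarᵀ) ≤ vnormSq ε / (n:ℝ) + lam * frobSq Xstar := by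
  set c : ℝ := (n : ℝ) * lam with hc_def
  have hn' : (0 : ℝ) < (n : ℝ) := by exact_mod_cast hn
  have hc : 0 < c := mul_pos hn' hlam
  set A : Matrix (Fin n) (Fin n) ℝ := c • (1 : Matrix (Fin n) (Fin n) ℝ) + F * Fᵀ with hA_def
  have hApd : A.PosDef := by
    apply Matrix.PosDef.add_posSemidef
    · rw [Matrix.smul_one_eq_diagonal]
      exact Matrix.PosDef.diagonal fun _ => hc
    · have := Matrix.posSemidef_self_mul_conjTranspose F
      rwa [Matrix.conjTranspose_eq_transpose_of_trivial] at this
  have hAdet : IsUnit A.det := (Matrix.isUnit_iff_isUnit_det A).mp hApd.isUnit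
  have hAinv : A * A⁻¹ = 1 := Matrix.mul_nonsing_inv A hAdet
  set D : Matrix (Fin n) (Fin n) ℝ := Matrix.diagonal y with hD_def
  set Z : Matrix (Fin n) (Fin r) ℝ := D * Ustar with hZ_def
  set E : Matrix (Fin n) (Fin r) ℝ := Matrix.diagonal ε * Ustar with hE_def
  set V : Matrix (Fin n) (Fin r) ℝ := A⁻¹ * Z with hV_def
  set P : Matrix (Fin d) (Fin r) ℝ := Fᵀ * V with hP_def
  set G : Matrix (Fin d) (Fin r) ℝ := P - Xstar with hG_def
  have hZeq : Z = F * Xstar + E := by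
    have hy : y = fun i => rowNorms (F * Xstar) i + ε i := funext hy_def
    rw [hZ_def, hD_def, hy, ← Matrix.diagonal_add, Matrix.add_mul, ← hUstar_def]
  have hZA : Z = A * V := by
    rw [hV_def, ← Matrix.mul_assoc, hAinv, Matrix.one_mul]
  have hZAV : Z = c • V + F * P := by
    rw [hZA, hA_def, Matrix.add_mul, Matrix.smul_mul, Matrix.one_mul, Matrix.mul_assoc, hP_def]
  have hEeq : E = c • V + F * G := by
    have hEZ : E = Z - F * Xstar := by rw [hZeq, add_sub_cancel_left]
    rw [hEZ, hZAV, hG_def, Matrix.mul_sub]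
    abel
  have hVFG : tpr V (F * G) = tpr G P := by
    rw [tpr_comm, tpr_mul_left, ← hP_def]
  have hFGV : tpr (F * G) V = tpr G P := by
    rw [tpr_mul_left, ← hP_def]
  have h1 : tpr E E = c ^ 2 * tpr V V + 2 * c * tpr G P + tpr (F * G) (F * G) := by
    rw [hEeq]
    simp only [tpr_add_left, tpr_add_right, tpr_smul_left, tpr_smul_right, hVFG, hFGV]
    ring
  have h2 : tpr Z V = c * tpr V V + tpr P P := by
    rw [hZAV, tpr_add_left, tpr_smul_left, tpr_mul_left F P V, ← hP_def]
  have h3 : tpr G G = tpr P P - 2 * tpr P Xstar + tpr Xstar Xstar := by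
    rw [hG_def]
    simp only [tpr_sub_left, tpr_sub_right, tpr_comm Xstar P]
    ring
  have h4 : tpr G P = tpr P P - tpr Xstar P := by
    rw [hG_def, tpr_sub_left]
  have h5 : tpr Xstar P = tpr P Xstar := tpr_comm _ _
  have hid : tpr E E + c * tpr Xstar Xstar - c * tpr Z V
      = c * tpr G G + tpr (F * G) (F * G) := by
    rw [h1, h2, h3, h4, h5]
    ring
  have hEE : tpr E E = vnormSq ε := by
    rw [tpr_eq_sum, Finset.sum_comm]
    unfold vnormSq
    apply Finset.sum_congr rfl
    intro i _
    have hEij : ∀ j, E i j = ε i * Ustar i j := by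
      intro j
      rw [hE_def, Matrix.diagonal_mul]
    calc ∑ j, (E i j) ^ 2 = ∑ j, (ε i) ^ 2 * (Ustar i j) ^ 2 := by
          apply Finset.sum_congr rfl
          intro j _
          rw [hEij j]
          ring
      _ = (ε i) ^ 2 * ∑ j, (Ustar i j) ^ 2 := by rw [Finset.mul_sum]
      _ = (ε i) ^ 2 := by rw [hUstar i, mul_one]
  have hXX : tpr Xstar Xstar = frobSq Xstar := by
    rw [tpr_eq_sum]
    unfold frobSq
    exact Finset.sum_comm
  have hDT : Dᵀ = D := by rw [hD_def, Matrix.diagonal_transpose]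
  have hmip : mip Mlam (Ustar * Ustarᵀ) = lam * tpr Z V := by
    unfold mip tpr
    rw [hMlam, hV_def, hZ_def]
    rw [Matrix.transpose_mul, Matrix.transpose_transpose]
    rw [Matrix.mul_assoc Ustar]
    rw [Matrix.trace_mul_comm]
    rw [Matrix.mul_smul, Matrix.smul_mul, Matrix.trace_smul, smul_eq_mul]
    congr 1
    rw [Matrix.transpose_mul, hDT]
    simp only [Matrix.mul_assoc]
  have hkey : c * tpr Z V ≤ vnormSq ε + c * frobSq Xstar := by
    rw [← hEE, ← hXX]
    have hg1 : 0 ≤ c * tpr G G := mul_nonneg hc.le (tpr_self_nonneg G)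
    have hg2 : 0 ≤ tpr (F * G) (F * G) := tpr_self_nonneg (F * G)
    linarith
  have hrw1 : lam * tpr Z V = (c * tpr Z V) / (n : ℝ) := by
    rw [hc_def]
    field_simp
  have hrw2 : vnormSq ε / (n : ℝ) + lam * frobSq Xstar
      = (vnormSq ε + c * frobSq Xstar) / (n : ℝ) := by
    rw [hc_def]
    field_simp
  rw [hmip, hrw1, hrw2]
  gcongr
end
end
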